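/- arXiv:0809.0144 — 8 statements merged into one kernel-verified Lean document; each statement's English description precedes it below -/
import Mathlib

section
/- Let q = exp(iπ/p) and let z, d be the p×p complex matrices with entries z_{ij} = δ_{i,j+1} and d_{ij} = (q - q⁻¹)·q^{1-j}·[j-1]_q·δ_{i+1,j} (i.e., z is the lower shift matrix and d has entries (q-q⁻¹)q^{1-j}[j-1]_q on the superdiagonal). Then d*z = (q - q⁻¹)·I + q⁻²·z*d, and z^p = 0, d^p = 0. -/
/-!
Both products `d z` and `z d` are diagonal. The superdiagonal entries of `d` are
`c n = (q - q⁻¹) q^(1-n) [n]_q = q - q^(1-2n)`, so `(z d)ᵢᵢ = c i` and `(d z)ᵢᵢ = c (i+1)`, except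
in the last row, where `d z` vanishes. The commutation relation is then the recursion
`c (n+1) = (q - q⁻¹) + q⁻² c n`, together with `c p = 0` in the last row, which holds because
`q ^ p = -1`. Nilpotency holds because `z` and `d` are strictly triangular.
-/

/-- Balanced quantum integer `[n]_q = (q^n - q^{-n})/(q - q^{-1})`. -/
noncomputable def qint (q : ℂ) (n : ℕ) : ℂ := (q ^ n - q⁻¹ ^ n) / (q - q⁻¹)

/-- The `p×p` lower shift matrix `z` (ones on the subdiagonal). -/
noncomputable def zmat (p : ℕ) : Matrix (Fin p) (Fin p) ℂ :=
  Matrix.of fun i j => if (i : ℕ) = (j : ℕ) + 1 then 1 else 0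

/-- The `p×p` matrix `d` with entries `(q - q⁻¹) q^{1-j} [j]_q` on the superdiagonal
(`j` the 0-based column index; in 1-based indexing the entry at `(j-1, j)` is
`(q - q⁻¹) q^{2-j} [j-1]_q`). -/
noncomputable def dmat (p : ℕ) (q : ℂ) : Matrix (Fin p) (Fin p) ℂ :=
  Matrix.of fun i j =>
    if (j : ℕ) = (i : ℕ) + 1 then (q - q⁻¹) * q ^ (1 - ((j : ℕ) : ℤ)) * qint q (j : ℕ)
    else 0

namespace Matrix

variable {α : Type*} {p : ℕ}

theorem pow_apply_eq_zero_of_subdiagonal [Semiring α] {M : Matrix (Fin p) (Fin p) α}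
    (hM : ∀ i j : Fin p, (i : ℕ) ≠ j + 1 → M i j = 0) (k : ℕ) (i j : Fin p)
    (hij : (i : ℕ) ≠ j + k) : (M ^ k) i j = 0 := by
  induction k generalizing i with
  | zero => exact one_apply_ne fun h => hij (by simp [h])
  | succ k ih =>
    rw [pow_succ', mul_apply]
    refine Finset.sum_eq_zero fun l _ => ?_
    by_cases hil : (i : ℕ) = l + 1
    · rw [ih l (by omega), mul_zero]
    · rw [hM i l hil, zero_mul]

theorem pow_card_eq_zero_of_subdiagonal [Semiring α] {M : Matrix (Fin p) (Fin p) α}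
    (hM : ∀ i j : Fin p, (i : ℕ) ≠ j + 1 → M i j = 0) : M ^ p = 0 := by
  ext i j
  exact pow_apply_eq_zero_of_subdiagonal hM p i j (by omega)

theorem pow_card_eq_zero_of_superdiagonal [CommSemiring α] {M : Matrix (Fin p) (Fin p) α}
    (hM : ∀ i j : Fin p, (j : ℕ) ≠ i + 1 → M i j = 0) : M ^ p = 0 := by
  rw [← transpose_eq_zero, transpose_pow]
  exact pow_card_eq_zero_of_subdiagonal fun i j h => hM j i h

def superdiag [Zero α] (p : ℕ) (w : ℕ → α) : Matrix (Fin p) (Fin p) α :=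
  of fun i j => if (j : ℕ) = i + 1 then w j else 0

end Matrix

open Matrix

theorem zmat_pow_card (p : ℕ) : zmat p ^ p = 0 :=
  pow_card_eq_zero_of_subdiagonal fun _ _ h => if_neg h

theorem superdiag_mul_zmat {p : ℕ} (w : ℕ → ℂ) :
    superdiag p w * zmat p =
      diagonal fun i : Fin p => if (i : ℕ) + 1 < p then w (i + 1) else 0 := by
  ext i j
  rw [mul_apply, diagonal_apply]
  by_cases hi : (i : ℕ) + 1 < p
  · rw [Fintype.sum_eq_single ⟨i + 1, hi⟩]
    · simp [superdiag, zmat, hi, Fin.ext_iff]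
    · exact fun l hl => mul_eq_zero_of_left (if_neg fun h => hl (Fin.ext h)) _
  · refine (Finset.sum_eq_zero fun l _ => ?_).trans (by simp [hi])
    exact mul_eq_zero_of_left (if_neg fun (h : (l : ℕ) = i + 1) => hi (h ▸ l.isLt)) _

theorem zmat_mul_superdiag {p : ℕ} (w : ℕ → ℂ) (hw : w 0 = 0) :
    zmat p * superdiag p w = diagonal fun i : Fin p => w i := by
  ext i j
  rw [mul_apply, diagonal_apply]
  by_cases hi : (i : ℕ) = 0
  · refine (Finset.sum_eq_zero fun l _ => ?_).trans (by simp [hi, hw])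
    exact mul_eq_zero_of_left (if_neg (by omega)) _
  · rw [Fintype.sum_eq_single ⟨(i : ℕ) - 1, by omega⟩]
    · have hi' : (i : ℕ) - 1 + 1 = i := by omega
      simp only [superdiag, zmat, of_apply, hi', if_true, one_mul, Fin.ext_iff]
      split_ifs with h₁ h₂ h₂
      · rw [h₁]
      · omega
      · omega
      · rfl
    · exact fun l hl => mul_eq_zero_of_left (if_neg fun h => hl (Fin.ext (show (l : ℕ) = i - 1 by omega))) _

theorem sub_inv_mul_qint (q : ℂ) (n : ℕ) : (q - q⁻¹) * qint q n = q ^ n - q⁻¹ ^ n := by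
  rcases eq_or_ne (q - q⁻¹) 0 with h | h
  · rw [h, zero_mul, eq_comm, sub_eq_zero]
    exact congrArg (· ^ n) (sub_eq_zero.mp h)
  · exact mul_div_cancel₀ _ h

noncomputable def dcoeff (q : ℂ) (n : ℕ) : ℂ := (q - q⁻¹) * q ^ (1 - (n : ℤ)) * qint q n

theorem dmat_eq_superdiag (p : ℕ) (q : ℂ) : dmat p q = superdiag p (dcoeff q) := rfl

theorem dmat_pow_card (p : ℕ) (q : ℂ) : dmat p q ^ p = 0 :=
  pow_card_eq_zero_of_superdiagonal fun _ _ h => if_neg h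

theorem dcoeff_zero (q : ℂ) : dcoeff q 0 = 0 := by
  simp [dcoeff, qint]

theorem dcoeff_eq {q : ℂ} (hq : q ≠ 0) (n : ℕ) : dcoeff q n = q - q⁻¹ ^ (2 * n) * q := by
  rw [dcoeff, mul_right_comm, sub_inv_mul_qint, zpow_sub₀ hq, zpow_one, zpow_natCast, inv_pow, inv_pow]
  field_simp
  ring

theorem dcoeff_succ {q : ℂ} (hq : q ≠ 0) (n : ℕ) :
    dcoeff q (n + 1) = (q - q⁻¹) + q⁻¹ ^ 2 * dcoeff q n := by
  rw [dcoeff_eq hq, dcoeff_eq hq]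
  linear_combination (-q⁻¹) * inv_mul_cancel₀ hq

theorem dcoeff_eq_zero_of_pow_eq_neg_one {q : ℂ} {n : ℕ} (hq : q ^ n = -1) : dcoeff q n = 0 := by
  have hq0 : q ≠ 0 := by rintro rfl; rcases n with _ | n <;> norm_num at hq
  rw [dcoeff_eq hq0, pow_mul', inv_pow, hq]
  norm_num

/-- for `q = exp(iπ/p)`, the shift matrix `z` and the superdiagonal
matrix `d` satisfy `d z = (q - q⁻¹) I + q⁻² z d`, and `z^p = 0`, `d^p = 0`. -/
theorem stmt3 (p : ℕ) (hp : 2 ≤ p) (q : ℂ)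
    (hq : q = Complex.exp ((Real.pi : ℂ) * Complex.I / (p : ℂ))) :
    dmat p q * zmat p
        = (q - q⁻¹) • (1 : Matrix (Fin p) (Fin p) ℂ) + (q⁻¹ ^ 2) • (zmat p * dmat p q) ∧
      zmat p ^ p = 0 ∧ dmat p q ^ p = 0 := by
  have hq0 : q ≠ 0 := hq ▸ Complex.exp_ne_zero _
  have hqp : q ^ p = -1 := by
    rw [hq, ← Complex.exp_nat_mul, mul_div_cancel₀ _ (Nat.cast_ne_zero.mpr (by omega)),
      Complex.exp_pi_mul_I]
  refine ⟨?_, zmat_pow_card p, dmat_pow_card p q⟩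
  rw [dmat_eq_superdiag, superdiag_mul_zmat, zmat_mul_superdiag _ (dcoeff_zero q),
    smul_one_eq_diagonal, ← diagonal_smul, diagonal_add]
  congr 1
  funext i
  split_ifs with hi
  · exact dcoeff_succ hq0 i
  · rw [Pi.smul_apply, smul_eq_mul, ← dcoeff_succ hq0, show (i : ℕ) + 1 = p by omega,
      dcoeff_eq_zero_of_pow_eq_neg_one hqp]
end

section
/- In the algebra generated by z, d with dz = q - q⁻¹ + q⁻²zd, the element 𝓔 = 1 - q⁻¹zd satisfies 𝓔^n = 1 + Σ_{i=1}^{n} [n choose i]_q·(-1)^i·q^{-ni}·z^i·d^i for all n ≥ 1. In particular 𝓔^p = 1 + z^p·d^p when q = e^{iπ/p}, so in the quotient by z^p = d^p = 0 one has 𝓔^p = 1 and 𝓔 is invertible. -/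
/-!
Right multiplication by `z d` acts triangularly on the elements `z^i d^i`:
`dz = q - q⁻¹ + q⁻² zd` gives `(z^i d^i)(z d) = q(1 - q⁻²ⁱ) z^i d^i + q⁻²ⁱ z^{i+1} d^{i+1}`, so
`(z^i d^i) 𝓔 = q⁻²ⁱ z^i d^i - q⁻²ⁱ⁻¹ z^{i+1} d^{i+1}`. Expanding `𝓔^{n+1} = 𝓔^n 𝓔` thus turns the
claimed coefficients into a Pascal-type recursion, which is the second `q`-Pascal rule for the
balanced `q`-binomials. When `q` is a primitive `2p`-th root of unity, the ratio relation
`(q^{n+2k+2} - q^n) [n, k+1] = (q^{2n+1} - q^{2k+1}) [n, k]` at `n = p` forces `[p, i] = 0` for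
`0 < i < p`, while the top coefficient is `(-1)^p q^{-p²} = 1` since `q^p = -1`.
-/

/-- The balanced Gaussian `q`-binomial coefficient, defined via the `q`-Pascal
recursion `[n+1 choose k+1]_q = q^{k+1} [n choose k+1]_q + q^{k+1-(n+1)} [n choose k]_q`
(so that `[n choose k]_q = [n]_q!/([n-k]_q! [k]_q!)` whenever the factorials are
nonzero). -/
noncomputable def qbinomG (q : ℂ) : ℕ → ℕ → ℂ
  | _, 0 => 1
  | 0, _ + 1 => 0
  | n + 1, k + 1 =>
      q ^ (k + 1) * qbinomG q n (k + 1) + q ^ (((k : ℤ) + 1) - ((n : ℤ) + 1)) * qbinomG q n k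

section QBinom

variable (q : ℂ)

@[simp]
lemma qbinomG_zero_right (n : ℕ) : qbinomG q n 0 = 1 := by cases n <;> rfl

lemma qbinomG_of_lt : ∀ {n k : ℕ}, n < k → qbinomG q n k = 0
  | 0, _ + 1, _ => rfl
  | n + 1, k + 1, h => by
    rw [qbinomG, qbinomG_of_lt (n := n) (k := k + 1) (by omega),
      qbinomG_of_lt (n := n) (k := k) (by omega), mul_zero, mul_zero, add_zero]

@[simp]
lemma qbinomG_self : ∀ n : ℕ, qbinomG q n n = 1
  | 0 => rfl
  | n + 1 => by rw [qbinomG, qbinomG_of_lt q n.lt_succ_self, qbinomG_self n]; simp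

variable {q}

lemma pow_mul_qbinomG_succ_succ (hq : q ≠ 0) (n k : ℕ) :
    q ^ (n + 1) * qbinomG q (n + 1) (k + 1)
      = q ^ (n + k + 2) * qbinomG q n (k + 1) + q ^ (k + 1) * qbinomG q n k := by
  have hshift : q ^ (((k : ℤ) + 1) - ((n : ℤ) + 1)) * q ^ (n + 1) = q ^ (k + 1) := by
    rw [← zpow_natCast, ← zpow_add₀ hq, ← zpow_natCast]
    push_cast
    ring_nf
  rw [qbinomG]
  linear_combination qbinomG q n k * hshift

lemma qbinomG_succ_right_ratio (hq : q ≠ 0) :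
    ∀ n k : ℕ, (q ^ (n + 2 * k + 2) - q ^ n) * qbinomG q n (k + 1)
      = (q ^ (2 * n + 1) - q ^ (2 * k + 1)) * qbinomG q n k
  | 0, 0 => by simp [qbinomG]
  | 0, k + 1 => by simp [qbinomG]
  | n + 1, 0 => by
    apply mul_left_cancel₀ (pow_ne_zero (n + 1) hq)
    have hpascal := pow_mul_qbinomG_succ_succ hq n 0
    have hratio := qbinomG_succ_right_ratio hq n 0
    simp only [qbinomG_zero_right] at hpascal hratio ⊢
    linear_combination (q ^ (n + 3) - q ^ (n + 1)) * hpascal + q ^ (n + 3) * hratio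
  | n + 1, k + 1 => by
    apply mul_left_cancel₀ (pow_ne_zero (n + 1) hq)
    linear_combination (q ^ (n + 2 * k + 5) - q ^ (n + 1)) * pow_mul_qbinomG_succ_succ hq n (k + 1)
      - (q ^ (2 * n + 3) - q ^ (2 * k + 3)) * pow_mul_qbinomG_succ_succ hq n k
      + q ^ (n + k + 4) * qbinomG_succ_right_ratio hq n (k + 1)
      + q ^ (k + 3) * qbinomG_succ_right_ratio hq n k

lemma pow_mul_qbinomG_succ_succ' (hq : q ≠ 0) (n k : ℕ) :
    q ^ (k + 1) * qbinomG q (n + 1) (k + 1)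
      = qbinomG q n (k + 1) + q ^ (n + 1) * qbinomG q n k := by
  apply mul_left_cancel₀ (pow_ne_zero (n + 1) hq)
  linear_combination q ^ (k + 1) * pow_mul_qbinomG_succ_succ hq n k
    + q * qbinomG_succ_right_ratio hq n k

lemma qbinomG_eq_zero_of_isPrimitiveRoot {p : ℕ} (hζ : IsPrimitiveRoot q (2 * p)) :
    ∀ {i : ℕ}, 0 < i → i < p → qbinomG q p i = 0
  | i + 1, _, hip => by
    have hq : q ≠ 0 := hζ.ne_zero (by omega)
    have hratio := qbinomG_succ_right_ratio hq p i
    have hlower : (q ^ (2 * p + 1) - q ^ (2 * i + 1)) * qbinomG q p i = 0 := by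
      rcases i.eq_zero_or_pos with rfl | hi
      · rw [pow_succ, hζ.pow_eq_one]
        ring
      · rw [qbinomG_eq_zero_of_isPrimitiveRoot hζ hi (by omega), mul_zero]
    have hfactor : q ^ (p + 2 * i + 2) - q ^ p ≠ 0 := by
      have hroot : (q ^ 2) ^ (i + 1) ≠ 1 :=
        (hζ.pow (by omega) rfl).pow_ne_one_of_pos_of_lt (by omega) hip
      rw [← pow_mul] at hroot
      rw [show q ^ (p + 2 * i + 2) - q ^ p = q ^ p * (q ^ (2 * (i + 1)) - 1) by ring]
      exact mul_ne_zero (pow_ne_zero p hq) (sub_ne_zero.mpr hroot)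
    rw [hlower] at hratio
    exact (mul_eq_zero.mp hratio).resolve_left hfactor

end QBinom

/-- The coefficient of `z^i d^i` in `(1 - q⁻¹ z d)^n`. -/
noncomputable def eCoeff (q : ℂ) (n i : ℕ) : ℂ :=
  qbinomG q n i * (-1) ^ i * q⁻¹ ^ (n * i)

section ECoeff

variable {q : ℂ}

@[simp]
lemma eCoeff_zero_right (q : ℂ) (n : ℕ) : eCoeff q n 0 = 1 := by simp [eCoeff]

lemma eCoeff_of_lt (q : ℂ) {n i : ℕ} (h : n < i) : eCoeff q n i = 0 := by
  simp [eCoeff, qbinomG_of_lt q h]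

lemma eCoeff_succ_succ (hq : q ≠ 0) (n k : ℕ) :
    eCoeff q (n + 1) (k + 1)
      = eCoeff q n (k + 1) * q⁻¹ ^ (2 * (k + 1)) - eCoeff q n k * (q⁻¹ * q⁻¹ ^ (2 * k)) := by
  have hpascal : qbinomG q (n + 1) (k + 1)
      = q⁻¹ ^ (k + 1) * (qbinomG q n (k + 1) + q ^ (n + 1) * qbinomG q n k) := by
    rw [← pow_mul_qbinomG_succ_succ' hq, ← mul_assoc, ← mul_pow, inv_mul_cancel₀ hq, one_pow,
      one_mul]
  simp only [eCoeff, hpascal, inv_pow]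
  field_simp
  ring

lemma eCoeff_self_of_pow_eq_neg_one {p : ℕ} (hqp : q ^ p = -1) : eCoeff q p p = 1 := by
  rw [eCoeff, qbinomG_self, pow_mul, inv_pow, hqp, one_mul, ← mul_pow]
  norm_num

end ECoeff

section Relation

variable {A : Type*} [Ring A] [Algebra ℂ A] {q : ℂ} (hq : q ≠ 0) {d z : A}
  (hrel : d * z = (q - q⁻¹) • (1 : A) + (q⁻¹ ^ 2) • (z * d))
include hq hrel

lemma d_pow_succ_mul_z : ∀ i : ℕ,
    d ^ (i + 1) * z = (q - q * q⁻¹ ^ (2 * (i + 1))) • d ^ i + q⁻¹ ^ (2 * (i + 1)) • (z * d ^ (i + 1))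
  | 0 => by
    have hc : q - q * q⁻¹ ^ 2 = q - q⁻¹ := by field_simp
    simpa only [zero_add, mul_one, pow_one, pow_zero, hc] using hrel
  | i + 1 => by
    have hq2 : q ^ 2 * q⁻¹ ^ 2 = 1 := by rw [← mul_pow, mul_inv_cancel₀ hq, one_pow]
    rw [pow_succ', mul_assoc, d_pow_succ_mul_z i, mul_add, mul_smul_comm, mul_smul_comm,
      ← mul_assoc, hrel, ← pow_succ', add_mul, smul_mul_assoc, smul_mul_assoc, one_mul,
      mul_assoc, ← pow_succ', smul_add, smul_smul, smul_smul, ← add_assoc, ← add_smul]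
    congr 2
    · field_simp
      linear_combination q⁻¹ ^ 2 * q⁻¹ ^ (i * 2) * hq2
    · field_simp
      linear_combination -(q⁻¹ ^ 2 * q⁻¹ ^ (i * 2)) * hq2

lemma zd_pow_mul_zd (i : ℕ) :
    (z ^ i * d ^ i) * (z * d)
      = (q - q * q⁻¹ ^ (2 * i)) • (z ^ i * d ^ i) + q⁻¹ ^ (2 * i) • (z ^ (i + 1) * d ^ (i + 1)) := by
  cases i with
  | zero => simp
  | succ i =>
    rw [show (z ^ (i + 1) * d ^ (i + 1)) * (z * d) = z ^ (i + 1) * ((d ^ (i + 1) * z) * d) by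
        noncomm_ring,
      d_pow_succ_mul_z hq hrel, add_mul, smul_mul_assoc, smul_mul_assoc, mul_add, mul_smul_comm,
      mul_smul_comm, ← pow_succ, mul_assoc z, ← pow_succ, ← mul_assoc, ← pow_succ]

lemma zd_pow_mul_one_sub (i : ℕ) :
    (z ^ i * d ^ i) * (1 - q⁻¹ • (z * d))
      = q⁻¹ ^ (2 * i) • (z ^ i * d ^ i) - (q⁻¹ * q⁻¹ ^ (2 * i)) • (z ^ (i + 1) * d ^ (i + 1)) := by
  rw [mul_sub, mul_one, mul_smul_comm, zd_pow_mul_zd hq hrel]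
  match_scalars
  · field_simp
    ring
  · field_simp

lemma one_sub_smul_zd_pow_eq_sum (n : ℕ) :
    (1 - q⁻¹ • (z * d)) ^ n = ∑ i ∈ Finset.range (n + 1), eCoeff q n i • (z ^ i * d ^ i) := by
  induction n with
  | zero => simp
  | succ n ih =>
    set F : ℕ → A := fun i => (eCoeff q n i * q⁻¹ ^ (2 * i)) • (z ^ i * d ^ i)
    set G : ℕ → A := fun i => (eCoeff q n i * (q⁻¹ * q⁻¹ ^ (2 * i))) • (z ^ (i + 1) * d ^ (i + 1))
    have hF_top : F (n + 1) = 0 := by simp [F, eCoeff_of_lt q n.lt_succ_self]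
    calc (1 - q⁻¹ • (z * d)) ^ (n + 1)
        = ∑ i ∈ Finset.range (n + 1), (F i - G i) := by
          rw [pow_succ, ih, Finset.sum_mul]
          refine Finset.sum_congr rfl fun i _ => ?_
          rw [smul_mul_assoc, zd_pow_mul_one_sub hq hrel, smul_sub, smul_smul, smul_smul]
      _ = F 0 + ∑ i ∈ Finset.range (n + 1), (F (i + 1) - G i) := by
          rw [Finset.sum_sub_distrib, Finset.sum_sub_distrib, Finset.sum_range_succ' F n,
            Finset.sum_range_succ (fun i => F (i + 1)) n, hF_top]
          abel
      _ = ∑ i ∈ Finset.range (n + 2), eCoeff q (n + 1) i • (z ^ i * d ^ i) := by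
          rw [Finset.sum_range_succ' _ (n + 1), add_comm]
          congr 1
          · exact Finset.sum_congr rfl fun i _ => by rw [eCoeff_succ_succ hq, sub_smul]
          · simp [F]

end Relation

theorem stmt9_general {A : Type*} [Ring A] [Algebra ℂ A] (q : ℂ) (hq : q ≠ 0)
    (d z : A)
    (hrel : d * z = (q - q⁻¹) • (1 : A) + (q⁻¹ ^ 2) • (z * d)) :
    (∀ n : ℕ, 1 ≤ n →
      ((1 : A) - q⁻¹ • (z * d)) ^ n
        = 1 + ∑ i ∈ Finset.Icc 1 n,
            (qbinomG q n i * (-1 : ℂ) ^ i * q⁻¹ ^ (n * i)) • (z ^ i * d ^ i)) ∧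
    (∀ p : ℕ, 2 ≤ p → q = Complex.exp ((Real.pi : ℂ) * Complex.I / (p : ℂ)) →
      ((1 : A) - q⁻¹ • (z * d)) ^ p = 1 + z ^ p * d ^ p ∧
      (z ^ p = 0 → d ^ p = 0 →
        ((1 : A) - q⁻¹ • (z * d)) ^ p = 1 ∧ IsUnit ((1 : A) - q⁻¹ • (z * d)))) := by
  have hpow (n : ℕ) : ((1 : A) - q⁻¹ • (z * d)) ^ n
      = 1 + ∑ i ∈ Finset.Icc 1 n, eCoeff q n i • (z ^ i * d ^ i) := by
    rw [one_sub_smul_zd_pow_eq_sum hq hrel, Nat.range_succ_eq_Icc_zero,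
      ← Finset.add_sum_Ioc_eq_sum_Icc n.zero_le, eCoeff_zero_right, one_smul,
      pow_zero, pow_zero, mul_one]
    rfl
  refine ⟨fun n _ => hpow n, fun p hp hqe => ?_⟩
  have hζ : IsPrimitiveRoot q (2 * p) := by
    have h := Complex.isPrimitiveRoot_exp (2 * p) (by omega)
    rwa [show 2 * Real.pi * Complex.I / ((2 * p : ℕ) : ℂ) = Real.pi * Complex.I / p by
      push_cast; field_simp, ← hqe] at h
  have hqp : q ^ p = -1 := (hζ.pow (by omega) (mul_comm 2 p)).eq_neg_one_of_two_right
  have hEp : ((1 : A) - q⁻¹ • (z * d)) ^ p = 1 + z ^ p * d ^ p := by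
    rw [hpow, Finset.sum_eq_single_of_mem p (Finset.mem_Icc.mpr ⟨by omega, le_rfl⟩),
      eCoeff_self_of_pow_eq_neg_one hqp, one_smul]
    intro i hi hip
    rw [eCoeff, qbinomG_eq_zero_of_isPrimitiveRoot hζ (Finset.mem_Icc.mp hi).1
      (lt_of_le_of_ne (Finset.mem_Icc.mp hi).2 hip), zero_mul, zero_mul, zero_smul]
  refine ⟨hEp, fun hz _ => ?_⟩
  have hE1 : ((1 : A) - q⁻¹ • (z * d)) ^ p = 1 := by rw [hEp, hz, zero_mul, add_zero]
  exact ⟨hE1, IsUnit.of_pow_eq_one hE1 (by omega)⟩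

/-- in an algebra with `d z = (q - q⁻¹)·1 + q⁻²·z d`, the element
`𝓔 = 1 - q⁻¹ z d` satisfies `𝓔^n = 1 + Σ_{i=1}^n [n choose i]_q (-1)^i q^{-ni} z^i d^i`.
In particular, when `q = e^{iπ/p}`, `𝓔^p = 1 + z^p d^p`; hence in the quotient by
`z^p = d^p = 0` one has `𝓔^p = 1` and `𝓔` is invertible. -/
theorem stmt9 {A : Type*} [Ring A] [Algebra ℂ A] (q : ℂ) (hq : q ≠ 0)
    (hq2 : q - q⁻¹ ≠ 0) (d z : A)
    (hrel : d * z = (q - q⁻¹) • (1 : A) + (q⁻¹ ^ 2) • (z * d)) :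
    (∀ n : ℕ, 1 ≤ n →
      ((1 : A) - q⁻¹ • (z * d)) ^ n
        = 1 + ∑ i ∈ Finset.Icc 1 n,
            (qbinomG q n i * (-1 : ℂ) ^ i * q⁻¹ ^ (n * i)) • (z ^ i * d ^ i)) ∧
    (∀ p : ℕ, 2 ≤ p → q = Complex.exp ((Real.pi : ℂ) * Complex.I / (p : ℂ)) →
      ((1 : A) - q⁻¹ • (z * d)) ^ p = 1 + z ^ p * d ^ p ∧
      (z ^ p = 0 → d ^ p = 0 →
        ((1 : A) - q⁻¹ • (z * d)) ^ p = 1 ∧ IsUnit ((1 : A) - q⁻¹ • (z * d)))) :=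
  stmt9_general q hq d z hrel
end

section
/- Let q = e^{iπ/p} and let Ā be the quotient of the algebra ⟨z, d | dz = q - q⁻¹ + q⁻²zd⟩ by the central elements z^p and d^p. Then the monomials z^m·d^n with 0 ≤ m, n ≤ p-1 form a basis of Ā, so dim Ā = p². -/
/-!
Straightening with `∂ z = (q - q⁻¹) + q⁻² z ∂` shows that the ordered monomials `z^m ∂^n` span any
algebra generated by `z` and `∂`, and `z^p = ∂^p = 0` cuts them down to `m, n < p`.
For independence, `Ā` acts on `ℂ^p` with `z` the shift `e k ↦ e (k+1)` and `∂` the `q`-derivative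
`e k ↦ (q - q^{1-2k}) e (k-1)`; since `q²` is a primitive `p`-th root of unity these weights vanish
at `k = p` (so the relations hold) but not for `0 < k < p`.
-/

/-- The defining relations of `ℂ̄_q[z,∂]`: `∂ z = (q - q⁻¹)·1 + q⁻²·z ∂`,
`z^p = 0`, `∂^p = 0` (generator `0` is `z`, generator `1` is `∂`). -/
inductive CqBarRel (q : ℂ) (p : ℕ) : FreeAlgebra ℂ (Fin 2) → FreeAlgebra ℂ (Fin 2) → Prop
  | main : CqBarRel q p (FreeAlgebra.ι ℂ 1 * FreeAlgebra.ι ℂ 0)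
      ((q - q⁻¹) • (1 : FreeAlgebra ℂ (Fin 2))
        + (q⁻¹ ^ 2) • (FreeAlgebra.ι ℂ 0 * FreeAlgebra.ι ℂ 1))
  | zp : CqBarRel q p ((FreeAlgebra.ι ℂ 0) ^ p) 0
  | dp : CqBarRel q p ((FreeAlgebra.ι ℂ 1) ^ p) 0

/-- The image of `z` in `ℂ̄_q[z,∂]`. -/
noncomputable def zbar (q : ℂ) (p : ℕ) : RingQuot (CqBarRel q p) :=
  RingQuot.mkRingHom (CqBarRel q p) (FreeAlgebra.ι ℂ 0)

/-- The image of `∂` in `ℂ̄_q[z,∂]`. -/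
noncomputable def dbar (q : ℂ) (p : ℕ) : RingQuot (CqBarRel q p) :=
  RingQuot.mkRingHom (CqBarRel q p) (FreeAlgebra.ι ℂ 1)

section Straightening

variable {R A : Type*} [CommSemiring R] [Semiring A] [Algebra R A] {x y : A}

lemma pow_mul_pow_mem_span (m n : ℕ) :
    x ^ m * y ^ n ∈ Submodule.span R (Set.range fun mn : ℕ × ℕ => x ^ mn.1 * y ^ mn.2) :=
  Submodule.subset_span ⟨(m, n), rfl⟩

lemma mul_mem_span_pow_mul_pow_of_forall {a s : A}
    (ha : ∀ m n : ℕ, a * (x ^ m * y ^ n) ∈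
      Submodule.span R (Set.range fun mn : ℕ × ℕ => x ^ mn.1 * y ^ mn.2))
    (hs : s ∈ Submodule.span R (Set.range fun mn : ℕ × ℕ => x ^ mn.1 * y ^ mn.2)) :
    a * s ∈ Submodule.span R (Set.range fun mn : ℕ × ℕ => x ^ mn.1 * y ^ mn.2) := by
  induction hs using Submodule.span_induction with
  | mem _ h => obtain ⟨⟨m, n⟩, rfl⟩ := h; exact ha m n
  | zero => simp
  | add _ _ _ _ hs ht => rw [mul_add]; exact add_mem hs ht
  | smul c _ _ hs => rw [mul_smul_comm]; exact Submodule.smul_mem _ c hs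

lemma left_mul_pow_mul_pow_mem_span (m n : ℕ) :
    x * (x ^ m * y ^ n) ∈ Submodule.span R (Set.range fun mn : ℕ × ℕ => x ^ mn.1 * y ^ mn.2) := by
  rw [← mul_assoc, ← pow_succ']
  exact pow_mul_pow_mem_span _ _

lemma right_mul_pow_mul_pow_mem_span {a b : R} (hyx : y * x = a • 1 + b • (x * y)) (m n : ℕ) :
    y * (x ^ m * y ^ n) ∈ Submodule.span R (Set.range fun mn : ℕ × ℕ => x ^ mn.1 * y ^ mn.2) := by
  induction m with
  | zero =>
    rw [pow_zero, one_mul, ← pow_succ']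
    simpa using pow_mul_pow_mem_span (R := R) (x := x) 0 (n + 1)
  | succ m ih =>
    have : y * (x ^ (m + 1) * y ^ n) = a • (x ^ m * y ^ n) + b • (x * (y * (x ^ m * y ^ n))) := by
      rw [pow_succ', mul_assoc x, ← mul_assoc y, hyx]
      simp only [add_mul, smul_mul_assoc, one_mul, mul_assoc]
    rw [this]
    exact add_mem (Submodule.smul_mem _ a (pow_mul_pow_mem_span m n))
      (Submodule.smul_mem _ b (mul_mem_span_pow_mul_pow_of_forall left_mul_pow_mul_pow_mem_span ih))

theorem span_pow_mul_pow_eq_top {a b : R} (hgen : Algebra.adjoin R {x, y} = ⊤)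
    (hyx : y * x = a • 1 + b • (x * y)) :
    Submodule.span R (Set.range fun mn : ℕ × ℕ => x ^ mn.1 * y ^ mn.2) = ⊤ := by
  refine Submodule.eq_top_iff'.mpr fun c => ?_
  have hc : c ∈ Algebra.adjoin R {x, y} := hgen ▸ Algebra.mem_top
  suffices ∀ s ∈ Submodule.span R (Set.range fun mn : ℕ × ℕ => x ^ mn.1 * y ^ mn.2),
      c * s ∈ Submodule.span R (Set.range fun mn : ℕ × ℕ => x ^ mn.1 * y ^ mn.2) by
    simpa using this 1 (by simpa using pow_mul_pow_mem_span (R := R) (x := x) (y := y) 0 0)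
  induction hc using Algebra.adjoin_induction with
  | mem c hc =>
    rcases hc with rfl | rfl
    · exact fun s => mul_mem_span_pow_mul_pow_of_forall left_mul_pow_mul_pow_mem_span
    · exact fun s => mul_mem_span_pow_mul_pow_of_forall (right_mul_pow_mul_pow_mem_span hyx)
  | algebraMap r =>
    intro s hs
    rw [Algebra.algebraMap_eq_smul_one, smul_one_mul]
    exact Submodule.smul_mem _ r hs
  | add c d _ _ hc hd => intro s hs; rw [add_mul]; exact add_mem (hc s hs) (hd s hs)
  | mul c d _ _ hc hd => intro s hs; rw [mul_assoc]; exact hc _ (hd s hs)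

theorem span_fin_pow_mul_pow_eq_top {a b : R} {p : ℕ} (hgen : Algebra.adjoin R {x, y} = ⊤)
    (hyx : y * x = a • 1 + b • (x * y)) (hx : x ^ p = 0) (hy : y ^ p = 0) :
    Submodule.span R
      (Set.range fun mn : Fin p × Fin p => x ^ (mn.1 : ℕ) * y ^ (mn.2 : ℕ)) = ⊤ := by
  rw [eq_top_iff, ← span_pow_mul_pow_eq_top hgen hyx, Submodule.span_le]
  rintro _ ⟨⟨m, n⟩, rfl⟩
  by_cases hm : m < p
  · by_cases hn : n < p
    · exact Submodule.subset_span ⟨(⟨m, hm⟩, ⟨n, hn⟩), rfl⟩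
    · simp [pow_eq_zero_of_le (not_lt.mp hn) hy]
  · simp [pow_eq_zero_of_le (not_lt.mp hm) hx]

end Straightening

namespace QDiffRep

variable {K : Type*} [Field K] {p : ℕ} {q : K}

def lam (q : K) (k : ℕ) : K := q - q * ((q ^ 2) ^ k)⁻¹

@[simp] lemma lam_zero : lam q 0 = 0 := by simp [lam]

lemma lam_succ (k : ℕ) : lam q (k + 1) = (q - q⁻¹) + q⁻¹ ^ 2 * lam q k := by
  rcases eq_or_ne q 0 with rfl | hq
  · simp [lam]
  · simp only [lam]; field_simp; ring

lemma lam_eq_zero_iff (hq : q ≠ 0) {k : ℕ} : lam q k = 0 ↔ (q ^ 2) ^ k = 1 := by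
  rw [lam, sub_eq_zero, eq_comm, mul_eq_left₀ hq, inv_eq_one]

lemma lam_eq_zero_of_pow_eq_one {k : ℕ} (h : (q ^ 2) ^ k = 1) : lam q k = 0 := by
  simp [lam, h]

variable (K p) in
/-- Indexed by `ℕ` and zero from `p` on, so that `Z` and `D` act by one formula on every `e k`. -/
def e (k : ℕ) : Fin p → K := fun i => if (i : ℕ) = k then 1 else 0

lemma e_coe (i : Fin p) : e K p i = Pi.basisFun K (Fin p) i := by
  ext j
  simp [e, Pi.single_apply, Fin.ext_iff]

lemma e_of_le {k : ℕ} (hk : p ≤ k) : e K p k = 0 := by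
  ext j
  simp [e, (j.isLt.trans_le hk).ne]

variable (p) in
noncomputable def Z : Module.End K (Fin p → K) :=
  (Pi.basisFun K (Fin p)).constr K fun i => e K p (i + 1)

variable (p q) in
noncomputable def D : Module.End K (Fin p → K) :=
  (Pi.basisFun K (Fin p)).constr K fun i => lam q i • e K p (i - 1)

lemma Z_e (k : ℕ) : Z p (e K p k) = e K p (k + 1) := by
  by_cases hk : k < p
  · rw [show e K p k = _ from e_coe ⟨k, hk⟩]
    exact (Pi.basisFun K (Fin p)).constr_basis K _ _
  · rw [e_of_le (not_lt.mp hk), e_of_le (by omega), map_zero]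

lemma D_e (hq : (q ^ 2) ^ p = 1) (k : ℕ) : D p q (e K p k) = lam q k • e K p (k - 1) := by
  rcases lt_trichotomy k p with hk | rfl | hk
  · rw [show e K p k = _ from e_coe ⟨k, hk⟩]
    exact (Pi.basisFun K (Fin p)).constr_basis K _ _
  · rw [e_of_le le_rfl, map_zero, lam_eq_zero_of_pow_eq_one hq, zero_smul]
  · rw [e_of_le hk.le, e_of_le (by omega), map_zero, smul_zero]

lemma Z_pow_e (m k : ℕ) : (Z p ^ m) (e K p k) = e K p (k + m) := by
  induction m with
  | zero => simp
  | succ m ih => rw [pow_succ', Module.End.mul_apply, ih, Z_e, add_assoc]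

lemma D_pow_e (hq : (q ^ 2) ^ p = 1) (n k : ℕ) :
    (D p q ^ n) (e K p k) = (∏ t ∈ Finset.range n, lam q (k - t)) • e K p (k - n) := by
  induction n with
  | zero => simp
  | succ n ih =>
    rw [pow_succ', Module.End.mul_apply, ih, map_smul, D_e hq, smul_smul, Finset.prod_range_succ,
      Nat.sub_sub]

lemma Z_pow_eq_zero : Z p ^ p = (0 : Module.End K (Fin p → K)) := by
  refine (Pi.basisFun K (Fin p)).ext fun i => ?_
  rw [← e_coe, Z_pow_e, e_of_le (by omega), LinearMap.zero_apply]

lemma prod_lam_sub_eq_zero {k n : ℕ} (h : k < n) : ∏ t ∈ Finset.range n, lam q (k - t) = 0 :=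
  Finset.prod_eq_zero (Finset.mem_range.mpr h) (by simp)

lemma D_pow_eq_zero (hq : (q ^ 2) ^ p = 1) : D p q ^ p = 0 := by
  refine (Pi.basisFun K (Fin p)).ext fun i => ?_
  rw [← e_coe, D_pow_e hq, prod_lam_sub_eq_zero i.isLt, zero_smul, LinearMap.zero_apply]

lemma D_mul_Z (hq : (q ^ 2) ^ p = 1) :
    D p q * Z p = (q - q⁻¹) • 1 + q⁻¹ ^ 2 • (Z p * D p q) := by
  refine (Pi.basisFun K (Fin p)).ext fun i => ?_
  rw [← e_coe]
  obtain ⟨i, hi⟩ := i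
  simp only [Module.End.mul_apply, LinearMap.add_apply, LinearMap.smul_apply, Module.End.one_apply,
    Z_e, D_e hq, map_smul, Nat.add_sub_cancel, lam_succ]
  cases i with
  | zero => simp
  | succ i => rw [Nat.add_sub_cancel]; module

lemma prod_lam_sub_self_ne_zero (hq : IsPrimitiveRoot (q ^ 2) p) {k : ℕ} (hk : k < p) :
    ∏ t ∈ Finset.range k, lam q (k - t) ≠ 0 := by
  have hq0 : q ≠ 0 := pow_ne_zero_iff two_ne_zero |>.mp (hq.ne_zero (by omega))
  refine Finset.prod_ne_zero_iff.mpr fun t ht => ?_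
  rw [Finset.mem_range] at ht
  rw [Ne, lam_eq_zero_iff hq0]
  exact hq.pow_ne_one_of_pos_of_lt (by omega) (by omega)

/-- Applied to `e n`, a combination of the `Z ^ m * D ^ n'` only sees the terms with `n' ≤ n`,
and those with `n' = n` send `e n` to independent multiples of the `e m`; induct on `n`. -/
theorem linearIndependent_Z_pow_mul_D_pow (hq : IsPrimitiveRoot (q ^ 2) p) :
    LinearIndependent K fun mn : Fin p × Fin p => Z p ^ (mn.1 : ℕ) * D p q ^ (mn.2 : ℕ) := by
  rw [Fintype.linearIndependent_iff]
  intro c hc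
  suffices ∀ n : Fin p, ∀ m, c (m, n) = 0 from fun mn => this mn.2 mn.1
  intro n
  induction n using WellFoundedLT.induction with
  | _ n ih =>
    have hsum := congrArg (fun T : Module.End K (Fin p → K) => T (e K p n)) hc
    simp only [LinearMap.sum_apply, LinearMap.smul_apply, Module.End.mul_apply,
      D_pow_e hq.pow_eq_one, map_smul, Z_pow_e, LinearMap.zero_apply,
      Fintype.sum_prod_type_right] at hsum
    rw [Finset.sum_eq_single n] at hsum
    · simp only [Nat.sub_self, zero_add, e_coe, smul_smul] at hsum
      intro m
      have hcoeff :=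
        Fintype.linearIndependent_iff.mp (Pi.basisFun K (Fin p)).linearIndependent _ hsum m
      exact (mul_eq_zero.mp hcoeff).resolve_right (prod_lam_sub_self_ne_zero hq n.isLt)
    · intro n' _ hn'
      rcases lt_or_gt_of_ne hn' with hlt | hgt
      · simp [ih n' hlt]
      · simp [prod_lam_sub_eq_zero (show (n : ℕ) < n' from hgt)]
    · simp

end QDiffRep

namespace CqBar

variable {p : ℕ} {q : ℂ}

lemma mkAlgHom_ι_zero : RingQuot.mkAlgHom ℂ (CqBarRel q p) (FreeAlgebra.ι ℂ 0) = zbar q p := by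
  rw [zbar, ← RingQuot.mkAlgHom_coe ℂ]
  rfl

lemma mkAlgHom_ι_one : RingQuot.mkAlgHom ℂ (CqBarRel q p) (FreeAlgebra.ι ℂ 1) = dbar q p := by
  rw [dbar, ← RingQuot.mkAlgHom_coe ℂ]
  rfl

lemma dbar_mul_zbar :
    dbar q p * zbar q p = (q - q⁻¹) • 1 + q⁻¹ ^ 2 • (zbar q p * dbar q p) := by
  simpa [mkAlgHom_ι_zero, mkAlgHom_ι_one] using
    RingQuot.mkAlgHom_rel ℂ (CqBarRel.main (q := q) (p := p))

lemma zbar_pow : zbar q p ^ p = 0 := by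
  simpa [mkAlgHom_ι_zero] using RingQuot.mkAlgHom_rel ℂ (CqBarRel.zp (q := q) (p := p))

lemma dbar_pow : dbar q p ^ p = 0 := by
  simpa [mkAlgHom_ι_one] using RingQuot.mkAlgHom_rel ℂ (CqBarRel.dp (q := q) (p := p))

lemma adjoin_zbar_dbar : Algebra.adjoin ℂ {zbar q p, dbar q p} = ⊤ := by
  have hrange : Set.range (RingQuot.mkAlgHom ℂ (CqBarRel q p) ∘ FreeAlgebra.ι ℂ) =
      {zbar q p, dbar q p} := by
    ext a
    simp [Fin.exists_fin_two, mkAlgHom_ι_zero, mkAlgHom_ι_one, eq_comm]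
  rw [← hrange, Set.range_comp, Algebra.adjoin_image, FreeAlgebra.adjoin_range_ι,
    Algebra.map_top, AlgHom.range_eq_top]
  exact RingQuot.mkAlgHom_surjective ℂ _

theorem span_monomials_eq_top :
    Submodule.span ℂ
      (Set.range fun mn : Fin p × Fin p => zbar q p ^ (mn.1 : ℕ) * dbar q p ^ (mn.2 : ℕ)) = ⊤ :=
  span_fin_pow_mul_pow_eq_top adjoin_zbar_dbar dbar_mul_zbar zbar_pow dbar_pow

variable {A : Type*} [Semiring A] [Algebra ℂ A]

noncomputable def lift (x y : A) (hyx : y * x = (q - q⁻¹) • 1 + q⁻¹ ^ 2 • (x * y))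
    (hx : x ^ p = 0) (hy : y ^ p = 0) : RingQuot (CqBarRel q p) →ₐ[ℂ] A :=
  RingQuot.liftAlgHom ℂ ⟨FreeAlgebra.lift ℂ ![x, y], fun _ _ h => by cases h <;> simp [*]⟩

section

variable {x y : A} {hyx : y * x = (q - q⁻¹) • 1 + q⁻¹ ^ 2 • (x * y)} {hx : x ^ p = 0}
  {hy : y ^ p = 0}

@[simp] lemma lift_zbar : lift x y hyx hx hy (zbar q p) = x := by
  rw [← mkAlgHom_ι_zero, lift, RingQuot.liftAlgHom_mkAlgHom_apply]
  simp

@[simp] lemma lift_dbar : lift x y hyx hx hy (dbar q p) = y := by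
  rw [← mkAlgHom_ι_one, lift, RingQuot.liftAlgHom_mkAlgHom_apply]
  simp

end

theorem linearIndependent_monomials (hq : IsPrimitiveRoot (q ^ 2) p) :
    LinearIndependent ℂ
      (fun mn : Fin p × Fin p => zbar q p ^ (mn.1 : ℕ) * dbar q p ^ (mn.2 : ℕ)) := by
  let ρ := lift (QDiffRep.Z p) (QDiffRep.D p q) (QDiffRep.D_mul_Z hq.pow_eq_one)
    QDiffRep.Z_pow_eq_zero (QDiffRep.D_pow_eq_zero hq.pow_eq_one)
  refine LinearIndependent.of_comp ρ.toLinearMap ?_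
  simpa [Function.comp_def, ρ] using QDiffRep.linearIndependent_Z_pow_mul_D_pow hq

end CqBar

/-- for `q = e^{iπ/p}`, the monomials `z^m ∂^n`, `0 ≤ m, n ≤ p-1`,
form a basis of `Ā = ℂ̄_q[z,∂]`, so `dim Ā = p²`. -/
theorem stmt10 (p : ℕ) (hp : 2 ≤ p) (q : ℂ)
    (hq : q = Complex.exp ((Real.pi : ℂ) * Complex.I / (p : ℂ))) :
    LinearIndependent ℂ
        (fun mn : Fin p × Fin p => zbar q p ^ (mn.1 : ℕ) * dbar q p ^ (mn.2 : ℕ)) ∧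
    Submodule.span ℂ
        (Set.range fun mn : Fin p × Fin p => zbar q p ^ (mn.1 : ℕ) * dbar q p ^ (mn.2 : ℕ))
      = ⊤ ∧
    Module.finrank ℂ (RingQuot (CqBarRel q p)) = p ^ 2 := by
  have hprim : IsPrimitiveRoot (q ^ 2) p := by
    rw [hq, ← Complex.exp_nat_mul]
    convert Complex.isPrimitiveRoot_exp p (by omega) using 2
    push_cast
    ring
  have hli := CqBar.linearIndependent_monomials hprim
  have hspan := CqBar.span_monomials_eq_top (p := p) (q := q)
  refine ⟨hli, hspan, ?_⟩
  rw [Module.finrank_eq_card_basis (Module.Basis.mk hli hspan.ge), Fintype.card_prod,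
    Fintype.card_fin, sq]
end

section
/- Let q = e^{iπ/p} and let z, d be the p×p matrices with z the lower shift and d_{j-1,j} = (q-q⁻¹)q^{2-j}[j-1]_q. Then the p² matrices z^m·d^n for 0 ≤ m, n ≤ p-1 are linearly independent, hence span Mat_p(ℂ); i.e., the quotient algebra ℂ̄_q[z,∂] is isomorphic to Mat_p(ℂ). -/
theorem LinearIndependent.of_dual_triangular {ι R M : Type*} [PartialOrder ι] [WellFoundedLT ι]
    [CommRing R] [NoZeroDivisors R] [AddCommGroup M] [Module R M]
    (v : ι → M) (f : ι → Module.Dual R M) (hdiag : ∀ i, f i (v i) ≠ 0)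
    (htri : ∀ i j, f i (v j) ≠ 0 → j ≤ i) : LinearIndependent R v := by
  classical
  rw [linearIndependent_iff']
  intro s g hsum i
  induction i using WellFoundedLT.induction with
  | ind i ih =>
    intro hi
    have hfi : ∑ j ∈ s, g j * f i (v j) = 0 := by
      simpa only [map_sum, map_smul, smul_eq_mul, map_zero] using congrArg (f i) hsum
    rw [Finset.sum_eq_single_of_mem i hi] at hfi
    · exact (mul_eq_zero.mp hfi).resolve_right (hdiag i)
    · intro j hj hji
      by_cases hvj : f i (v j) = 0
      · rw [hvj, mul_zero]
      · rw [ih j (lt_of_le_of_ne (htri i j hvj) hji) hj, zero_mul]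

section Shift

variable {R : Type*} [Semiring R] [NoZeroDivisors R] {p : ℕ}

theorem Matrix.pow_apply_ne_zero_iff_of_superdiagonal [Nontrivial R] {A : Matrix (Fin p) (Fin p) R}
    (hA : ∀ i j, A i j ≠ 0 ↔ (j : ℕ) = i + 1) (n : ℕ) (i j : Fin p) :
    (A ^ n) i j ≠ 0 ↔ (j : ℕ) = i + n := by
  induction n generalizing j with
  | zero => simp [Matrix.one_apply, Fin.ext_iff, eq_comm]
  | succ n ih =>
    rw [pow_succ, Matrix.mul_apply]
    constructor
    · intro h
      obtain ⟨k, -, hk⟩ := Finset.exists_ne_zero_of_sum_ne_zero h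
      have hik := (ih k).mp (left_ne_zero_of_mul hk)
      have hkj := (hA k j).mp (right_ne_zero_of_mul hk)
      omega
    · intro hj
      have hk : (i : ℕ) + n < p := by omega
      rw [Finset.sum_eq_single ⟨i + n, hk⟩]
      · exact mul_ne_zero ((ih _).mpr rfl) ((hA _ _).mpr (by simp [hj, add_assoc]))
      · intro k _ hk'
        have hik : (A ^ n) i k = 0 := by
          by_contra h
          exact hk' (Fin.ext ((ih k).mp h))
        rw [hik, zero_mul]
      · simp

theorem Matrix.mul_apply_ne_zero_iff_of_shifts {B C : Matrix (Fin p) (Fin p) R} {m n : ℕ}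
    (hB : ∀ i k, B i k ≠ 0 ↔ (i : ℕ) = k + m) (hC : ∀ k j, C k j ≠ 0 ↔ (j : ℕ) = k + n)
    (i j : Fin p) : (B * C) i j ≠ 0 ↔ ∃ k : Fin p, (i : ℕ) = k + m ∧ (j : ℕ) = k + n := by
  rw [Matrix.mul_apply]
  constructor
  · intro h
    obtain ⟨k, -, hk⟩ := Finset.exists_ne_zero_of_sum_ne_zero h
    exact ⟨k, (hB i k).mp (left_ne_zero_of_mul hk), (hC k j).mp (right_ne_zero_of_mul hk)⟩
  · rintro ⟨k, hik, hkj⟩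
    rw [Finset.sum_eq_single k]
    · exact mul_ne_zero ((hB i k).mpr hik) ((hC k j).mpr hkj)
    · intro k' _ hk'
      have hik' : B i k' = 0 := by
        by_contra h
        exact hk' (Fin.ext (by have := (hB i k').mp h; omega))
      rw [hik', zero_mul]
    · simp

end Shift

theorem isPrimitiveRoot_exp_pi_mul_I_div_sq {p : ℕ} (hp : p ≠ 0) :
    IsPrimitiveRoot (Complex.exp (Real.pi * Complex.I / p) ^ 2) p := by
  rw [← Complex.exp_nat_mul]
  convert Complex.isPrimitiveRoot_exp p hp using 2
  push_cast
  ring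

section RootOfUnity

variable {p : ℕ} {q : ℂ} (hq : IsPrimitiveRoot (q ^ 2) p)
include hq

theorem ne_zero_of_isPrimitiveRoot_sq (hp : p ≠ 0) : q ≠ 0 :=
  (pow_ne_zero_iff two_ne_zero).mp (hq.ne_zero hp)

theorem pow_sub_inv_pow_ne_zero {k : ℕ} (hk0 : 0 < k) (hkp : k < p) : q ^ k - q⁻¹ ^ k ≠ 0 := by
  intro h
  have hqk : q ^ k = q⁻¹ ^ k := sub_eq_zero.mp h
  apply hq.pow_ne_one_of_pos_of_lt hk0.ne' hkp
  have hq0 := ne_zero_of_isPrimitiveRoot_sq hq (by omega)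
  calc (q ^ 2) ^ k = q ^ k * q⁻¹ ^ k := by rw [← hqk]; ring
    _ = 1 := by rw [← mul_pow, mul_inv_cancel₀ hq0, one_pow]

theorem dmat_apply_ne_zero_iff (i j : Fin p) : dmat p q i j ≠ 0 ↔ (j : ℕ) = i + 1 := by
  simp only [dmat, Matrix.of_apply]
  split_ifs with hj
  · refine iff_of_true ?_ hj
    have hjp := j.isLt
    have hsub : q - q⁻¹ ≠ 0 := by simpa using pow_sub_inv_pow_ne_zero hq one_pos (by omega)
    have hq0 := ne_zero_of_isPrimitiveRoot_sq hq i.pos.ne'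
    exact mul_ne_zero (mul_ne_zero hsub (zpow_ne_zero _ hq0))
      (div_ne_zero (pow_sub_inv_pow_ne_zero hq (by omega) hjp) hsub)
  · simp [hj]

end RootOfUnity

theorem zmat_pow_apply_ne_zero_iff (p m : ℕ) (i j : Fin p) :
    (zmat p ^ m) i j ≠ 0 ↔ (i : ℕ) = j + m := by
  have hzT : ∀ i j : Fin p, Matrix.transpose (zmat p) i j ≠ 0 ↔ (j : ℕ) = i + 1 := by
    intro i j
    simp [zmat]
  have := Matrix.pow_apply_ne_zero_iff_of_superdiagonal hzT m j i
  rwa [← Matrix.transpose_pow, Matrix.transpose_apply] at this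

/-- for `q = e^{iπ/p}`, the `p²` matrices `z^m d^n`, `0 ≤ m, n ≤ p-1`,
are linearly independent, hence span `Mat_p(ℂ)`; i.e. `ℂ̄_q[z,∂] ≅ Mat_p(ℂ)`. -/
theorem stmt11 (p : ℕ) (hp : 2 ≤ p) (q : ℂ)
    (hq : q = Complex.exp ((Real.pi : ℂ) * Complex.I / (p : ℂ))) :
    LinearIndependent ℂ
        (fun mn : Fin p × Fin p => zmat p ^ (mn.1 : ℕ) * dmat p q ^ (mn.2 : ℕ)) ∧
    Submodule.span ℂ
        (Set.range fun mn : Fin p × Fin p => zmat p ^ (mn.1 : ℕ) * dmat p q ^ (mn.2 : ℕ))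
      = ⊤ := by
  have hroot : IsPrimitiveRoot (q ^ 2) p := hq ▸ isPrimitiveRoot_exp_pi_mul_I_div_sq (by omega)
  have hentry (m' n' : ℕ) (i j : Fin p) : (zmat p ^ m' * dmat p q ^ n') i j ≠ 0 ↔
      ∃ k : Fin p, (i : ℕ) = k + m' ∧ (j : ℕ) = k + n' :=
    Matrix.mul_apply_ne_zero_iff_of_shifts (zmat_pow_apply_ne_zero_iff p m')
      (Matrix.pow_apply_ne_zero_iff_of_superdiagonal (dmat_apply_ne_zero_iff hroot) n') i j
  have hli : LinearIndependent ℂ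
      (fun mn : Fin p × Fin p => zmat p ^ (mn.1 : ℕ) * dmat p q ^ (mn.2 : ℕ)) := by
    refine .of_dual_triangular _ (fun mn => Matrix.entryLinearMap ℂ ℂ mn.1 mn.2) ?_ ?_
    · rintro ⟨m, n⟩
      exact (hentry m n m n).mpr ⟨⟨0, by omega⟩, by simp, by simp⟩
    · rintro ⟨m, n⟩ ⟨m', n'⟩ h
      obtain ⟨k, hm, hn⟩ := (hentry m' n' m n).mp h
      exact Prod.mk_le_mk.mpr ⟨Fin.le_iff_val_le_val.mpr (by omega),
        Fin.le_iff_val_le_val.mpr (by omega)⟩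
  refine ⟨hli, hli.span_eq_top_of_card_eq_finrank' ?_⟩
  simp [Module.finrank_matrix]
end

section
/- Let q = e^{iπ/p} and consider the U-action on Ā = ℂ̄_q[z,∂]. Define t = Σ_{i=1}^{p-1} (1/[i]_q)·z^i·∂^i. Then in Ā: E(t) = z and F(t) = ∂ (since z^p = ∂^p = 0, the correction terms q·z^p∂^{p-1} and q·z^{p-1}∂^p vanish). -/
/-! Writing `E(z^i ∂^i) = [i]_q (f_i - f_{i+1})` with `f_i = q^{1-i} z^i ∂^{i-1}`, the sum
`E(t) = Σ_{i=1}^{p-1} (f_i - f_{i+1})` telescopes to `f_1 - f_p = z - q^{1-p} z^p ∂^{p-1} = z`;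
the same works for `F` with `f_i = q^{1-i} z^{i-1} ∂^i`. Dividing by `[i]_q` is legitimate because
`q^2 = e^{2πi/p}` is a primitive `p`-th root of unity, so `[i]_q ≠ 0` for `0 < i < p`. -/

theorem LinearMap.map_sum_Icc_inv_smul_of_telescoping {K M M' : Type*} [Field K]
    [AddCommGroup M] [Module K M] [AddCommGroup M'] [Module K M'] (T : M →ₗ[K] M')
    (c : ℕ → K) (x : ℕ → M) (f : ℕ → M') {m n : ℕ} (hmn : m ≤ n)
    (hc : ∀ i ∈ Finset.Icc m n, c i ≠ 0)
    (hT : ∀ i ∈ Finset.Icc m n, T (x i) = c i • (f i - f (i + 1))) :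
    T (∑ i ∈ Finset.Icc m n, (c i)⁻¹ • x i) = f m - f (n + 1) := by
  have hterm : ∀ i ∈ Finset.Icc m n, T ((c i)⁻¹ • x i) = -(f (i + 1) - f i) := fun i hi => by
    rw [map_smul, hT i hi, inv_smul_smul₀ (hc i hi), neg_sub]
  rw [map_sum, Finset.sum_congr rfl hterm, Finset.sum_neg_distrib, Finset.sum_Icc_sub hmn,
    neg_sub]

theorem pow_sub_inv_pow_ne_zero_s14 {K : Type*} [Field K] {q : K} (hq : q ≠ 0) {n : ℕ}
    (hn : q ^ (2 * n) ≠ 1) : q ^ n - q⁻¹ ^ n ≠ 0 := by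
  have hfactor : q ^ n - q⁻¹ ^ n = q⁻¹ ^ n * (q ^ (2 * n) - 1) := by
    rw [mul_sub, two_mul, pow_add, ← mul_assoc, ← mul_pow, inv_mul_cancel₀ hq, one_pow, one_mul,
      mul_one]
  rw [hfactor]
  exact mul_ne_zero (pow_ne_zero _ (inv_ne_zero hq)) (sub_ne_zero.mpr hn)

theorem qint_ne_zero {q : ℂ} (hq : q ≠ 0) (hq2 : q ^ 2 ≠ 1) {n : ℕ} (hn : q ^ (2 * n) ≠ 1) :
    qint q n ≠ 0 := by
  have hden : q - q⁻¹ ≠ 0 := by simpa using pow_sub_inv_pow_ne_zero_s14 hq (n := 1) hq2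
  exact div_ne_zero (pow_sub_inv_pow_ne_zero_s14 hq hn) hden

theorem isPrimitiveRoot_sq_exp_pi_mul_I_div {p : ℕ} (hp : p ≠ 0) :
    IsPrimitiveRoot (Complex.exp ((Real.pi : ℂ) * Complex.I / p) ^ 2) p := by
  rw [← Complex.exp_nat_mul]
  convert Complex.isPrimitiveRoot_exp p hp using 2
  push_cast
  ring

theorem qint_exp_pi_mul_I_div_ne_zero {p i : ℕ} (hi : 0 < i) (hip : i < p) :
    qint (Complex.exp ((Real.pi : ℂ) * Complex.I / p)) i ≠ 0 := by
  have hprim := isPrimitiveRoot_sq_exp_pi_mul_I_div (p := p) (by omega)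
  refine qint_ne_zero (Complex.exp_ne_zero _) ?_ ?_
  · simpa using hprim.pow_ne_one_of_pos_of_lt one_ne_zero (by omega)
  · rw [pow_mul]
    exact hprim.pow_ne_one_of_pos_of_lt hi.ne' hip

theorem map_sum_Icc_qint_inv_smul {M M' : Type*} [AddCommGroup M] [Module ℂ M]
    [AddCommGroup M'] [Module ℂ M'] (T : M →ₗ[ℂ] M') (x : ℕ → M) (a : ℕ → M') {p : ℕ}
    (hp : 2 ≤ p) {q : ℂ} (hq : ∀ i ∈ Finset.Icc 1 (p - 1), qint q i ≠ 0)
    (hT : ∀ i : ℕ, T (x i) = (q ^ (1 - (i : ℤ)) * qint q i) • a i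
      - (q ^ ((i : ℤ) - 2 * (i : ℤ)) * qint q i) • a (i + 1))
    (ha : a p = 0) :
    T (∑ i ∈ Finset.Icc 1 (p - 1), (qint q i)⁻¹ • x i) = a 1 := by
  have hexp : ∀ i : ℕ, (i : ℤ) - 2 * (i : ℤ) = 1 - ((i + 1 : ℕ) : ℤ) := fun i => by
    push_cast; ring
  rw [LinearMap.map_sum_Icc_inv_smul_of_telescoping T (qint q) x
      (fun i => q ^ (1 - (i : ℤ)) • a i) (by omega) hq (fun i _ => ?_),
    Nat.sub_add_cancel (by omega), ha]
  · simp
  · rw [hT, smul_sub, smul_smul, smul_smul, mul_comm (qint q i), mul_comm (qint q i), hexp]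

theorem zbar_pow_self (q : ℂ) (p : ℕ) : zbar q p ^ p = 0 := by
  rw [zbar, ← map_pow, RingQuot.mkRingHom_rel CqBarRel.zp, map_zero]

theorem dbar_pow_self (q : ℂ) (p : ℕ) : dbar q p ^ p = 0 := by
  rw [dbar, ← map_pow, RingQuot.mkRingHom_rel CqBarRel.dp, map_zero]

/-- with the `U`-action on `Ā = ℂ̄_q[z,∂]` given on monomials by
`E(z^m∂^n) = q^{1-n}[n]_q z^m∂^{n-1} - q^{m-2n}[m]_q z^{m+1}∂^n` and
`F(z^m∂^n) = q^{1-m}[m]_q z^{m-1}∂^n - q^{n-2m}[n]_q z^m∂^{n+1}`, the element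
`t = Σ_{i=1}^{p-1} (1/[i]_q) z^i ∂^i` satisfies `E(t) = z` and `F(t) = ∂`. -/
theorem stmt14 (p : ℕ) (hp : 2 ≤ p) (q : ℂ)
    (hq : q = Complex.exp ((Real.pi : ℂ) * Complex.I / (p : ℂ)))
    (E F : Module.End ℂ (RingQuot (CqBarRel q p)))
    (hE : ∀ m n : ℕ, E (zbar q p ^ m * dbar q p ^ n)
      = (q ^ (1 - (n : ℤ)) * qint q n) • (zbar q p ^ m * dbar q p ^ (n - 1))
        - (q ^ ((m : ℤ) - 2 * (n : ℤ)) * qint q m) • (zbar q p ^ (m + 1) * dbar q p ^ n))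
    (hF : ∀ m n : ℕ, F (zbar q p ^ m * dbar q p ^ n)
      = (q ^ (1 - (m : ℤ)) * qint q m) • (zbar q p ^ (m - 1) * dbar q p ^ n)
        - (q ^ ((n : ℤ) - 2 * (m : ℤ)) * qint q n) • (zbar q p ^ m * dbar q p ^ (n + 1))) :
    E (∑ i ∈ Finset.Icc 1 (p - 1), (qint q i)⁻¹ • (zbar q p ^ i * dbar q p ^ i))
        = zbar q p ∧
    F (∑ i ∈ Finset.Icc 1 (p - 1), (qint q i)⁻¹ • (zbar q p ^ i * dbar q p ^ i))
        = dbar q p := by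
  have hqint : ∀ i ∈ Finset.Icc 1 (p - 1), qint q i ≠ 0 := fun i hi => by
    rw [Finset.mem_Icc] at hi
    exact hq ▸ qint_exp_pi_mul_I_div_ne_zero (by omega) (by omega)
  constructor
  · simpa using map_sum_Icc_qint_inv_smul E (fun i => zbar q p ^ i * dbar q p ^ i)
      (fun i => zbar q p ^ i * dbar q p ^ (i - 1)) hp hqint (fun i => by simpa using hE i i)
      (by simp [zbar_pow_self])
  · simpa using map_sum_Icc_qint_inv_smul F (fun i => zbar q p ^ i * dbar q p ^ i)
      (fun i => zbar q p ^ (i - 1) * dbar q p ^ i) hp hqint (fun i => by simpa using hF i i)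
      (by simp [dbar_pow_self])
end

section
/- With the U-action E(z^m∂^n) = q^{1-n}[n]_q z^m∂^{n-1} - q^{m-2n}[m]_q z^{m+1}∂^n on Ā = ℂ̄_q[z,∂] at q = e^{iπ/p}, let p = 2s+1 be odd and set t₁ = Σ_{i=0}^{s} q^{is}·[s+i-1 choose i]_q·z^{i+s}·∂^i. Then E(t₁) = 0. -/
namespace qbinomG

variable {q : ℂ}

@[simp]
lemma zero_right (n : ℕ) : qbinomG q n 0 = 1 := by
  cases n <;> rfl

@[simp]
lemma zero_succ (k : ℕ) : qbinomG q 0 (k + 1) = 0 := rfl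

lemma pow_mul_succ_succ (hq : q ≠ 0) (n k : ℕ) :
    q ^ (n + 1) * qbinomG q (n + 1) (k + 1)
      = q ^ (n + k + 2) * qbinomG q n (k + 1) + q ^ (k + 1) * qbinomG q n k := by
  have hpow : q ^ (n + 1) * q ^ (((k : ℤ) + 1) - ((n : ℤ) + 1)) = q ^ (k + 1) := by
    rw [← zpow_natCast q (n + 1), ← zpow_add₀ hq, ← zpow_natCast q (k + 1)]
    push_cast
    ring_nf
  rw [qbinomG, mul_add, ← mul_assoc, ← mul_assoc, hpow]
  ring

-- `[k+1] [n+1 choose k+1] = [n+1] [n choose k]` from `[k+1] [n choose k+1] = [n-k] [n choose k]`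
lemma absorption_of_ratio (hq : q ≠ 0) {n k : ℕ}
    (hratio : q ^ n * qbinomG q n (k + 1) * (q ^ (2 * k + 2) - 1)
      = q * qbinomG q n k * (q ^ (2 * n) - q ^ (2 * k))) :
    q ^ (n + 1) * qbinomG q (n + 1) (k + 1) * (q ^ (2 * k + 2) - 1)
      = q ^ (k + 1) * qbinomG q n k * (q ^ (2 * n + 2) - 1) := by
  linear_combination (q ^ (2 * k + 2) - 1) * pow_mul_succ_succ hq n k + q ^ (k + 2) * hratio

-- `[n+1-k] [n+1 choose k] = [n+1] [n choose k]`
lemma succ_left_of_ratio (hq : q ≠ 0) {n : ℕ}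
    (hratio : ∀ k, q ^ n * qbinomG q n (k + 1) * (q ^ (2 * k + 2) - 1)
      = q * qbinomG q n k * (q ^ (2 * n) - q ^ (2 * k))) (k : ℕ) :
    q ^ k * qbinomG q n k * (q ^ (2 * n + 2) - 1)
      = qbinomG q (n + 1) k * (q ^ (2 * n + 2) - q ^ (2 * k)) := by
  cases k with
  | zero => simp
  | succ k =>
    refine mul_left_cancel₀ (pow_ne_zero (n + 1) hq) ?_
    linear_combination (q ^ (2 * (k + 1)) - q ^ (2 * n + 2)) * pow_mul_succ_succ hq n k
      + q ^ (k + 2) * hratio k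

lemma ratio (hq : q ≠ 0) (n : ℕ) : ∀ k : ℕ,
    q ^ n * qbinomG q n (k + 1) * (q ^ (2 * k + 2) - 1)
      = q * qbinomG q n k * (q ^ (2 * n) - q ^ (2 * k)) := by
  induction n with
  | zero => rintro (_ | _) <;> simp
  | succ n ih =>
    intro k
    refine mul_left_cancel₀ (pow_ne_zero (n + 1) hq) ?_
    linear_combination q ^ (n + 1) * absorption_of_ratio hq (ih k)
      + q ^ (n + 2) * succ_left_of_ratio hq ih k

lemma qint_mul_succ_succ (n k : ℕ) :
    qint q (k + 1) * qbinomG q (n + 1) (k + 1) = qint q (n + 1) * qbinomG q n k := by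
  by_cases hd : q - q⁻¹ = 0
  · simp [qint, hd]
  have hq : q ≠ 0 := by rintro rfl; simp at hd
  have hqint (m : ℕ) : (q - q⁻¹) * qint q m = q ^ m - q⁻¹ ^ m := mul_div_cancel₀ _ hd
  refine mul_left_cancel₀ hd ?_
  rw [← mul_assoc, ← mul_assoc, hqint, hqint, inv_pow, inv_pow]
  field_simp
  linear_combination absorption_of_ratio hq (ratio hq n k)

end qbinomG

lemma pow_mul_qbinomG_mul_qint_succ_eq (q : ℂ) {s : ℕ} (hs : 0 < s) (j : ℕ) :
    q ^ ((j + 1) * s) * qbinomG q (s + (j + 1) - 1) (j + 1)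
        * (q ^ (1 - ((j + 1 : ℕ) : ℤ)) * qint q (j + 1))
      = q ^ (j * s) * qbinomG q (s + j - 1) j
        * (q ^ (((j + s : ℕ) : ℤ) - 2 * (j : ℤ)) * qint q (j + s)) := by
  rcases eq_or_ne q 0 with rfl | hq
  · simp [qint]
  obtain ⟨n, hn⟩ : ∃ n, s + j = n + 1 := ⟨s + j - 1, by omega⟩
  rw [show s + (j + 1) - 1 = n + 1 by omega, show s + j - 1 = n by omega,
    show j + s = n + 1 by omega]
  have hpow : q ^ ((j + 1) * s) * q ^ (1 - ((j + 1 : ℕ) : ℤ))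
      = q ^ (j * s) * q ^ (((n + 1 : ℕ) : ℤ) - 2 * (j : ℤ)) := by
    simp only [← zpow_natCast, ← zpow_add₀ hq]
    congr 1
    have hn' : (s : ℤ) + j = n + 1 := by exact_mod_cast hn
    push_cast
    linear_combination hn'
  linear_combination (qbinomG q (n + 1) (j + 1) * qint q (j + 1)) * hpow
    + (q ^ (j * s) * q ^ (((n + 1 : ℕ) : ℤ) - 2 * (j : ℤ))) * qbinomG.qint_mul_succ_succ n j

lemma map_sum_smul_pow_mul_pow_of_pow_eq_zero {A : Type*} [Ring A] [Algebra ℂ A] (q : ℂ) (s : ℕ)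
    (z d : A) (hz : z ^ (2 * s + 1) = 0) (E : Module.End ℂ A)
    (hE : ∀ m n : ℕ, E (z ^ m * d ^ n)
      = (q ^ (1 - (n : ℤ)) * qint q n) • (z ^ m * d ^ (n - 1))
        - (q ^ ((m : ℤ) - 2 * (n : ℤ)) * qint q m) • (z ^ (m + 1) * d ^ n))
    (c : ℕ → ℂ) :
    E (∑ i ∈ Finset.range (s + 1), c i • (z ^ (i + s) * d ^ i))
      = ∑ j ∈ Finset.range s,
          (c (j + 1) * (q ^ (1 - ((j + 1 : ℕ) : ℤ)) * qint q (j + 1))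
            - c j * (q ^ (((j + s : ℕ) : ℤ) - 2 * (j : ℤ)) * qint q (j + s)))
          • (z ^ (j + s + 1) * d ^ j) := by
  simp only [map_sum, map_smul, hE, smul_sub, smul_smul, Finset.sum_sub_distrib, sub_smul]
  rw [Finset.sum_range_succ' _ s, Finset.sum_range_succ]
  have hz' : z ^ (s + s + 1) = 0 := by rwa [← two_mul]
  have hqint : qint q 0 = 0 := by simp [qint]
  simp only [hqint, CharP.cast_eq_zero, mul_zero, zero_smul, add_zero, hz', zero_mul, smul_zero,
    add_tsub_cancel_right]
  congr 1
  refine Finset.sum_congr rfl fun j _ => ?_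
  rw [show j + 1 + s = j + s + 1 by omega]

theorem stmt15_general (p s : ℕ) (hps : p = 2 * s + 1) (q : ℂ)
    (E : Module.End ℂ (RingQuot (CqBarRel q p)))
    (hE : ∀ m n : ℕ, E (zbar q p ^ m * dbar q p ^ n)
      = (q ^ (1 - (n : ℤ)) * qint q n) • (zbar q p ^ m * dbar q p ^ (n - 1))
        - (q ^ ((m : ℤ) - 2 * (n : ℤ)) * qint q m) • (zbar q p ^ (m + 1) * dbar q p ^ n)) :
    E (∑ i ∈ Finset.range (s + 1),
        (q ^ (i * s) * qbinomG q (s + i - 1) i) • (zbar q p ^ (i + s) * dbar q p ^ i))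
      = 0 := by
  have hz : zbar q p ^ (2 * s + 1) = 0 := by
    rw [← hps, zbar, ← map_pow, RingQuot.mkRingHom_rel CqBarRel.zp, map_zero]
  rw [map_sum_smul_pow_mul_pow_of_pow_eq_zero q s _ _ hz E hE]
  refine Finset.sum_eq_zero fun j hj => ?_
  rw [pow_mul_qbinomG_mul_qint_succ_eq q (Nat.zero_lt_of_lt (Finset.mem_range.1 hj)), sub_self,
    zero_smul]

/-- for odd `p = 2s+1` and the `U`-action
`E(z^m∂^n) = q^{1-n}[n]_q z^m∂^{n-1} - q^{m-2n}[m]_q z^{m+1}∂^n` on `Ā = ℂ̄_q[z,∂]`,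
the element `t₁ = Σ_{i=0}^{s} q^{is} [s+i-1 choose i]_q z^{i+s}∂^i` satisfies `E(t₁) = 0`. -/
theorem stmt15 (p s : ℕ) (hs : 1 ≤ s) (hps : p = 2 * s + 1) (q : ℂ)
    (hq : q = Complex.exp ((Real.pi : ℂ) * Complex.I / (p : ℂ)))
    (E : Module.End ℂ (RingQuot (CqBarRel q p)))
    (hE : ∀ m n : ℕ, E (zbar q p ^ m * dbar q p ^ n)
      = (q ^ (1 - (n : ℤ)) * qint q n) • (zbar q p ^ m * dbar q p ^ (n - 1))
        - (q ^ ((m : ℤ) - 2 * (n : ℤ)) * qint q m) • (zbar q p ^ (m + 1) * dbar q p ^ n)) :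
    E (∑ i ∈ Finset.range (s + 1),
        (q ^ (i * s) * qbinomG q (s + i - 1) i) • (zbar q p ^ (i + s) * dbar q p ^ i))
      = 0 :=
  stmt15_general p s hps q E hE
end

section
/- For each 1 ≤ r ≤ ⌊(p-1)/2⌋, the element b₁ = Σ_{i=0}^{p-r-1} ([r+i-1]_q!/[i]_q!)·q^{ri}·z^{i+r}·∂^i of Ā = ℂ̄_q[z,∂] satisfies E(b₁) = 0, where E acts on monomials by E(z^m∂^n) = q^{1-n}[n]_q z^m∂^{n-1} - q^{m-2n}[m]_q z^{m+1}∂^n. -/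
/-- Quantum factorial `[n]_q! = [1]_q [2]_q ⋯ [n]_q`. -/
noncomputable def qfact (q : ℂ) : ℕ → ℂ
  | 0 => 1
  | n + 1 => qfact q n * qint q (n + 1)

open Finset

lemma isPrimitiveRoot_exp_pi_mul_I_div {p : ℕ} (hp : p ≠ 0) :
    IsPrimitiveRoot (Complex.exp (Real.pi * Complex.I / p)) (2 * p) := by
  convert Complex.isPrimitiveRoot_exp (2 * p) (by omega) using 2
  have : (p : ℂ) ≠ 0 := Nat.cast_ne_zero.mpr hp
  push_cast
  field_simp

lemma qfact_of_pos (q : ℂ) {n : ℕ} (hn : 0 < n) : qfact q n = qfact q (n - 1) * qint q n := by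
  obtain ⟨m, rfl⟩ := Nat.exists_eq_add_of_lt hn
  rfl

namespace IsPrimitiveRoot

variable {q : ℂ} {p k : ℕ}

lemma pow_sub_inv_pow_ne_zero (hq : IsPrimitiveRoot q (2 * p)) (hk0 : 0 < k) (hkp : k < p) :
    q ^ k - q⁻¹ ^ k ≠ 0 := by
  intro h
  have h2k : q ^ (2 * k) = 1 := by
    rw [two_mul, pow_add]
    nth_rewrite 2 [sub_eq_zero.mp h]
    rw [← mul_pow, mul_inv_cancel₀ (hq.ne_zero (by omega)), one_pow]
  have hdvd : p ∣ k := Nat.dvd_of_mul_dvd_mul_left two_pos (hq.pow_eq_one_iff_dvd _ |>.mp h2k)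
  exact absurd (Nat.le_of_dvd hk0 hdvd) (by omega)

lemma qint_ne_zero (hq : IsPrimitiveRoot q (2 * p)) (hk0 : 0 < k) (hkp : k < p) :
    qint q k ≠ 0 :=
  div_ne_zero (hq.pow_sub_inv_pow_ne_zero hk0 hkp)
    (by simpa using hq.pow_sub_inv_pow_ne_zero one_pos (by omega))

lemma qfact_ne_zero (hq : IsPrimitiveRoot q (2 * p)) (hkp : k < p) : qfact q k ≠ 0 := by
  induction k with
  | zero => simp [qfact]
  | succ k ih => exact mul_ne_zero (ih (by omega)) (hq.qint_ne_zero k.succ_pos hkp)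

end IsPrimitiveRoot

noncomputable def bCoeff (q : ℂ) (r i : ℕ) : ℂ := qfact q (r + i - 1) / qfact q i * q ^ (r * i)

lemma bCoeff_succ_mul {q : ℂ} {r i : ℕ} (hr : 1 ≤ r) (hq0 : q ≠ 0) (hi : qfact q i ≠ 0)
    (hi1 : qint q (i + 1) ≠ 0) :
    bCoeff q r (i + 1) * (q ^ (1 - ((i + 1 : ℕ) : ℤ)) * qint q (i + 1))
      = bCoeff q r i * (q ^ (((i + r : ℕ) : ℤ) - 2 * (i : ℤ)) * qint q (i + r)) := by
  have hfact : qfact q (r + (i + 1) - 1) = qfact q (r + i - 1) * qint q (i + r) := by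
    rw [show r + (i + 1) - 1 = r + i by omega, qfact_of_pos q (by omega : 0 < r + i), add_comm i r]
  have hexp : (((i + r : ℕ) : ℤ) - 2 * (i : ℤ)) = (r : ℤ) + (1 - ((i + 1 : ℕ) : ℤ)) := by
    push_cast
    ring
  simp only [bCoeff, hfact, qfact, hexp, zpow_add₀ hq0, zpow_natCast]
  rw [mul_add, pow_add, mul_one]
  field_simp

section Telescoping

variable {A : Type*} [Ring A] [Module ℂ A] {q : ℂ} {p r : ℕ} {z d : A} {E : Module.End ℂ A}

lemma map_bCoeff_smul_eq_sub (hr : 1 ≤ r) (hq : IsPrimitiveRoot q (2 * p))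
    (hE : ∀ m n : ℕ, E (z ^ m * d ^ n)
      = (q ^ (1 - (n : ℤ)) * qint q n) • (z ^ m * d ^ (n - 1))
        - (q ^ ((m : ℤ) - 2 * (n : ℤ)) * qint q m) • (z ^ (m + 1) * d ^ n))
    {i : ℕ} (hi : i + 1 < p) :
    let f : ℕ → A := fun j => (bCoeff q r j * (q ^ (1 - (j : ℤ)) * qint q j)) •
      (z ^ (j + r) * d ^ (j - 1))
    E (bCoeff q r i • (z ^ (i + r) * d ^ i)) = f i - f (i + 1) := by
  have hcoeff := bCoeff_succ_mul hr (hq.ne_zero (by omega)) (hq.qfact_ne_zero (k := i) (by omega))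
    (hq.qint_ne_zero i.succ_pos hi)
  simp only [map_smul, hE, smul_sub, smul_smul, hcoeff, Nat.add_sub_cancel]
  rw [add_right_comm i 1 r]

theorem map_sum_bCoeff_smul_eq_zero (hr : 1 ≤ r) (hq : IsPrimitiveRoot q (2 * p))
    (hz : z ^ p = 0)
    (hE : ∀ m n : ℕ, E (z ^ m * d ^ n)
      = (q ^ (1 - (n : ℤ)) * qint q n) • (z ^ m * d ^ (n - 1))
        - (q ^ ((m : ℤ) - 2 * (n : ℤ)) * qint q m) • (z ^ (m + 1) * d ^ n)) :
    E (∑ i ∈ range (p - r), bCoeff q r i • (z ^ (i + r) * d ^ i)) = 0 := by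
  rw [map_sum, sum_congr rfl fun i hi =>
    map_bCoeff_smul_eq_sub hr hq hE (by have := mem_range.mp hi; omega), sum_range_sub']
  have hz' : z ^ (p - r + r) = 0 := pow_eq_zero_of_le (by omega) hz
  simp [qint, hz']

end Telescoping

theorem stmt16_general (p r : ℕ) (hr1 : 1 ≤ r) (hr2 : r ≤ (p - 1) / 2) (q : ℂ)
    (hq : q = Complex.exp ((Real.pi : ℂ) * Complex.I / (p : ℂ)))
    (E : Module.End ℂ (RingQuot (CqBarRel q p)))
    (hE : ∀ m n : ℕ, E (zbar q p ^ m * dbar q p ^ n)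
      = (q ^ (1 - (n : ℤ)) * qint q n) • (zbar q p ^ m * dbar q p ^ (n - 1))
        - (q ^ ((m : ℤ) - 2 * (n : ℤ)) * qint q m) • (zbar q p ^ (m + 1) * dbar q p ^ n)) :
    E (∑ i ∈ Finset.range (p - r),
        (qfact q (r + i - 1) / qfact q i * q ^ (r * i)) • (zbar q p ^ (i + r) * dbar q p ^ i))
      = 0 := by
  have hprim : IsPrimitiveRoot q (2 * p) := hq ▸ isPrimitiveRoot_exp_pi_mul_I_div (by omega)
  have hz : zbar q p ^ p = 0 := by
    rw [zbar, ← map_pow, RingQuot.mkRingHom_rel CqBarRel.zp, map_zero]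
  exact map_sum_bCoeff_smul_eq_zero hr1 hprim hz hE

/-- for `1 ≤ r ≤ ⌊(p-1)/2⌋`, the element
`b₁ = Σ_{i=0}^{p-r-1} ([r+i-1]_q!/[i]_q!) q^{ri} z^{i+r}∂^i` of `Ā = ℂ̄_q[z,∂]`
satisfies `E(b₁) = 0`, where
`E(z^m∂^n) = q^{1-n}[n]_q z^m∂^{n-1} - q^{m-2n}[m]_q z^{m+1}∂^n`. -/
theorem stmt16 (p r : ℕ) (hp : 2 ≤ p) (hr1 : 1 ≤ r) (hr2 : r ≤ (p - 1) / 2) (q : ℂ)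
    (hq : q = Complex.exp ((Real.pi : ℂ) * Complex.I / (p : ℂ)))
    (E : Module.End ℂ (RingQuot (CqBarRel q p)))
    (hE : ∀ m n : ℕ, E (zbar q p ^ m * dbar q p ^ n)
      = (q ^ (1 - (n : ℤ)) * qint q n) • (zbar q p ^ m * dbar q p ^ (n - 1))
        - (q ^ ((m : ℤ) - 2 * (n : ℤ)) * qint q m) • (zbar q p ^ (m + 1) * dbar q p ^ n)) :
    E (∑ i ∈ Finset.range (p - r),
        (qfact q (r + i - 1) / qfact q i * q ^ (r * i)) • (zbar q p ^ (i + r) * dbar q p ^ i))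
      = 0 :=
  stmt16_general p r hr1 hr2 q hq E hE
end

section
/- Let Ω be the associative unital algebra on generators z, ∂, ζ, δ with relations ∂z = q - q⁻¹ + q⁻²z∂, ζ² = 0, δ² = 0, δζ = -q⁻²ζδ, ζz = q⁻²zζ, δ∂ = q²∂δ, ζ∂ = q²∂ζ, δz = q⁻²zδ. Define the linear map d by d(z) = ζ, d(∂) = δ, d(ζ) = d(δ) = 0, d(1) = 0, extended as a graded derivation (where ζ, δ have degree 1 and z, ∂ have degree 0). Then d is well defined on Ω (it preserves the defining ideal), d² = 0, and d(z^m) = q^{1-m}[m]_q z^{m-1}ζ, d(∂^n) = q^{n-1}[n]_q ∂^{n-1}δ. -/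
/-- The defining relations of `Ω`: generators `0 = z`, `1 = ∂`, `2 = ζ`, `3 = δ`,
with `∂z = (q-q⁻¹)·1 + q⁻² z∂`, `ζ² = δ² = 0`, `δζ = -q⁻² ζδ`,
`ζz = q⁻² zζ`, `δ∂ = q² ∂δ`, `ζ∂ = q² ∂ζ`, `δz = q⁻² zδ`. -/
inductive OmRel (q : ℂ) : FreeAlgebra ℂ (Fin 4) → FreeAlgebra ℂ (Fin 4) → Prop
  | dz : OmRel q (FreeAlgebra.ι ℂ 1 * FreeAlgebra.ι ℂ 0)
      ((q - q⁻¹) • (1 : FreeAlgebra ℂ (Fin 4))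
        + (q⁻¹ ^ 2) • (FreeAlgebra.ι ℂ 0 * FreeAlgebra.ι ℂ 1))
  | zeta2 : OmRel q (FreeAlgebra.ι ℂ 2 * FreeAlgebra.ι ℂ 2) 0
  | delta2 : OmRel q (FreeAlgebra.ι ℂ 3 * FreeAlgebra.ι ℂ 3) 0
  | deltazeta : OmRel q (FreeAlgebra.ι ℂ 3 * FreeAlgebra.ι ℂ 2)
      ((-(q⁻¹ ^ 2)) • (FreeAlgebra.ι ℂ 2 * FreeAlgebra.ι ℂ 3))
  | zetaz : OmRel q (FreeAlgebra.ι ℂ 2 * FreeAlgebra.ι ℂ 0)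
      ((q⁻¹ ^ 2) • (FreeAlgebra.ι ℂ 0 * FreeAlgebra.ι ℂ 2))
  | deltad : OmRel q (FreeAlgebra.ι ℂ 3 * FreeAlgebra.ι ℂ 1)
      ((q ^ 2) • (FreeAlgebra.ι ℂ 1 * FreeAlgebra.ι ℂ 3))
  | zetad : OmRel q (FreeAlgebra.ι ℂ 2 * FreeAlgebra.ι ℂ 1)
      ((q ^ 2) • (FreeAlgebra.ι ℂ 1 * FreeAlgebra.ι ℂ 2))
  | deltaz : OmRel q (FreeAlgebra.ι ℂ 3 * FreeAlgebra.ι ℂ 0)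
      ((q⁻¹ ^ 2) • (FreeAlgebra.ι ℂ 0 * FreeAlgebra.ι ℂ 3))

/-- The images of the generators `z`, `∂`, `ζ`, `δ` in `Ω`. -/
noncomputable def omGen (q : ℂ) (i : Fin 4) : RingQuot (OmRel q) :=
  RingQuot.mkRingHom (OmRel q) (FreeAlgebra.ι ℂ i)

section TwistedDerivation

variable {R A B : Type*} [CommSemiring R] [Semiring A] [Algebra R A]

def IsTwistedDerivation [Semiring B] [Algebra R B] (f g : A →ₐ[R] B) (D : A →ₗ[R] B) : Prop :=
  ∀ a b, D (a * b) = D a * f b + g a * D b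

variable [Ring B] [Algebra R B]

namespace IsTwistedDerivation

variable {f g : A →ₐ[R] B} {D : A →ₗ[R] B}

theorem map_one_eq_zero (hD : IsTwistedDerivation f g D) : D 1 = 0 := by
  have h := hD 1 1
  rwa [mul_one, map_one f, map_one g, mul_one, one_mul, left_eq_add] at h

theorem map_algebraMap (hD : IsTwistedDerivation f g D) (r : R) : D (algebraMap R A r) = 0 := by
  rw [Algebra.algebraMap_eq_smul_one, map_smul, hD.map_one_eq_zero, smul_zero]

theorem eq_zero_of_adjoin_eq_top (hD : IsTwistedDerivation f g D) {s : Set A}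
    (hs : Algebra.adjoin R s = ⊤) (h : ∀ x ∈ s, D x = 0) : D = 0 := by
  ext a
  induction (hs ▸ Algebra.mem_top : a ∈ Algebra.adjoin R s) using Algebra.adjoin_induction with
  | mem x hx => exact h x hx
  | algebraMap r => exact hD.map_algebraMap r
  | add x y _ _ hx hy => simp_all
  | mul x y _ _ hx hy => simp_all [hD x y]

end IsTwistedDerivation

end TwistedDerivation

section TwistedDerivationEndo

open Finset

variable {R A : Type*} [CommSemiring R] [Ring A] [Algebra R A] {σ : A →ₐ[R] A} {D : A →ₗ[R] A}

namespace IsTwistedDerivation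

theorem map_pow (hD : IsTwistedDerivation (AlgHom.id R A) σ D) {x y : A} {c : R}
    (hσx : σ x = x) (hDx : D x = y) (hyx : y * x = c • (x * y)) (n : ℕ) :
    D (x ^ n) = (∑ k ∈ range n, c ^ k) • (x ^ (n - 1) * y) := by
  induction n with
  | zero => simp [hD.map_one_eq_zero]
  | succ n ih =>
    rcases Nat.eq_zero_or_pos n with rfl | hn
    · simp [hDx]
    rw [pow_succ, hD, ih, AlgHom.id_apply, _root_.map_pow, hσx, hDx, smul_mul_assoc, mul_assoc, hyx,
      mul_smul_comm, smul_smul, ← mul_assoc, ← pow_succ, Nat.sub_add_cancel hn,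
      Nat.add_sub_cancel, geom_sum_succ, add_smul, one_smul, mul_comm]

theorem comp_add_comp (hD : IsTwistedDerivation (AlgHom.id R A) σ D) :
    IsTwistedDerivation σ (σ.comp σ) (D ∘ₗ σ.toLinearMap + σ.toLinearMap ∘ₗ D) := by
  intro a b
  simp only [LinearMap.add_apply, LinearMap.comp_apply, AlgHom.toLinearMap_apply,
    AlgHom.comp_apply, map_mul, hD a b, hD (σ a) (σ b), AlgHom.id_apply, map_add]
  noncomm_ring

theorem comp_self (hD : IsTwistedDerivation (AlgHom.id R A) σ D)
    (hDσ : D ∘ₗ σ.toLinearMap + σ.toLinearMap ∘ₗ D = 0) :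
    IsTwistedDerivation (AlgHom.id R A) (σ.comp σ) (D ∘ₗ D) := by
  intro a b
  have h : D (σ a) = -σ (D a) := eq_neg_of_add_eq_zero_left (LinearMap.congr_fun hDσ a)
  simp only [LinearMap.comp_apply, AlgHom.comp_apply, AlgHom.id_apply, hD a b, map_add,
    hD (D a) b, hD (σ a) (D b), h]
  noncomm_ring

end IsTwistedDerivation

end TwistedDerivationEndo

section TwistedBimodule

variable {R A : Type*} [CommSemiring R] [Semiring A] [Algebra R A]

def TwistedBimodule (_σ : A →ₐ[R] A) : Type _ := A

namespace TwistedBimodule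

variable (σ : A →ₐ[R] A)

instance : AddCommMonoid (TwistedBimodule σ) := inferInstanceAs (AddCommMonoid A)

instance : Module R (TwistedBimodule σ) := inferInstanceAs (Module R A)

instance : Module A (TwistedBimodule σ) := Module.compHom A σ.toRingHom

instance : Module Aᵐᵒᵖ (TwistedBimodule σ) := inferInstanceAs (Module Aᵐᵒᵖ A)

def of : A ≃ₗ[R] TwistedBimodule σ := LinearEquiv.refl R A

theorem smul_of (a m : A) : a • of σ m = of σ (σ a * m) := rfl

theorem op_smul_of (b m : A) : MulOpposite.op b • of σ m = of σ (m * b) := rfl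

instance : SMulCommClass A Aᵐᵒᵖ (TwistedBimodule σ) :=
  ⟨fun a b (m : A) => (mul_assoc (σ a) m b.unop).symm⟩

instance : IsScalarTower R A (TwistedBimodule σ) :=
  ⟨fun c a (m : A) => show σ (c • a) * m = c • (σ a * m) by rw [map_smul, smul_mul_assoc]⟩

instance : IsScalarTower R Aᵐᵒᵖ (TwistedBimodule σ) :=
  ⟨fun c b (m : A) => show m * (c • b).unop = c • (m * b.unop) by
    rw [MulOpposite.unop_smul, mul_smul_comm]⟩

variable {σ} (Φ : A →ₐ[R] TrivSqZeroExt A (TwistedBimodule σ))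

def derivation : A →ₗ[R] A where
  toFun a := (of σ).symm (Φ a).snd
  map_add' a b := by simp
  map_smul' c a := by simp

theorem of_derivation (a : A) : of σ (derivation Φ a) = (Φ a).snd := rfl

theorem isTwistedDerivation_derivation (hΦ : ∀ a, (Φ a).fst = a) :
    IsTwistedDerivation (AlgHom.id R A) σ (derivation Φ) := by
  intro a b
  apply (of σ).injective
  rw [of_derivation, map_mul, TrivSqZeroExt.snd_mul, hΦ, hΦ, ← of_derivation, ← of_derivation,
    smul_of, op_smul_of, add_comm]
  rfl

end TwistedBimodule

end TwistedBimodule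

section QuantumInteger

open Finset

variable {q : ℂ}

theorem qint_inv (n : ℕ) : qint q⁻¹ n = qint q n := by
  rw [qint, qint, inv_inv, ← neg_sub q, ← neg_sub (q ^ n), neg_div_neg_eq]

theorem zpow_sub_one_mul_qint (hq : q ≠ 0) (hq2 : q - q⁻¹ ≠ 0) (n : ℕ) :
    q ^ ((n : ℤ) - 1) * qint q n = ∑ k ∈ range n, (q ^ 2) ^ k := by
  have hq1 : q ^ 2 - 1 ≠ 0 := by
    rwa [show q ^ 2 - 1 = q * (q - q⁻¹) by field_simp, mul_ne_zero_iff_left hq]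
  rw [geom_sum_eq (sub_ne_zero.mp hq1), qint, zpow_sub₀ hq, zpow_natCast, zpow_one]
  simp only [inv_pow]
  field_simp
  ring

theorem zpow_one_sub_mul_qint (hq : q ≠ 0) (hq2 : q - q⁻¹ ≠ 0) (m : ℕ) :
    q ^ (1 - (m : ℤ)) * qint q m = ∑ k ∈ range m, (q⁻¹ ^ 2) ^ k := by
  have hq2' : q⁻¹ - q⁻¹⁻¹ ≠ 0 := by rwa [inv_inv, ← neg_sub, neg_ne_zero]
  rw [← zpow_sub_one_mul_qint (inv_ne_zero hq) hq2' m, qint_inv, inv_zpow', neg_sub]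

end QuantumInteger

namespace Omega

open TwistedBimodule

variable (q : ℂ)

theorem omGen_eq_mkAlgHom (i : Fin 4) :
    omGen q i = RingQuot.mkAlgHom ℂ (OmRel q) (FreeAlgebra.ι ℂ i) := by
  rw [omGen, ← RingQuot.mkAlgHom_coe ℂ]; rfl

theorem adjoin_range_omGen : Algebra.adjoin ℂ (Set.range (omGen q)) = ⊤ := by
  rw [show omGen q = RingQuot.mkAlgHom ℂ (OmRel q) ∘ FreeAlgebra.ι ℂ from
      funext (omGen_eq_mkAlgHom q), Set.range_comp, Algebra.adjoin_image,
    FreeAlgebra.adjoin_range_ι, Algebra.map_top, AlgHom.range_eq_top]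
  exact RingQuot.mkAlgHom_surjective ℂ (OmRel q)

theorem del_mul_z :
    omGen q 1 * omGen q 0 = (q - q⁻¹) • 1 + q⁻¹ ^ 2 • (omGen q 0 * omGen q 1) := by
  simpa [omGen_eq_mkAlgHom] using RingQuot.mkAlgHom_rel ℂ (OmRel.dz (q := q))

theorem zeta_mul_zeta : omGen q 2 * omGen q 2 = 0 := by
  simpa [omGen_eq_mkAlgHom] using RingQuot.mkAlgHom_rel ℂ (OmRel.zeta2 (q := q))

theorem delta_mul_delta : omGen q 3 * omGen q 3 = 0 := by
  simpa [omGen_eq_mkAlgHom] using RingQuot.mkAlgHom_rel ℂ (OmRel.delta2 (q := q))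

theorem delta_mul_zeta : omGen q 3 * omGen q 2 = (-q⁻¹ ^ 2) • (omGen q 2 * omGen q 3) := by
  simp only [omGen_eq_mkAlgHom, ← map_mul, ← map_smul]
  exact RingQuot.mkAlgHom_rel ℂ OmRel.deltazeta

theorem zeta_mul_z : omGen q 2 * omGen q 0 = q⁻¹ ^ 2 • (omGen q 0 * omGen q 2) := by
  simpa [omGen_eq_mkAlgHom] using RingQuot.mkAlgHom_rel ℂ (OmRel.zetaz (q := q))

theorem delta_mul_del : omGen q 3 * omGen q 1 = q ^ 2 • (omGen q 1 * omGen q 3) := by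
  simpa [omGen_eq_mkAlgHom] using RingQuot.mkAlgHom_rel ℂ (OmRel.deltad (q := q))

theorem zeta_mul_del : omGen q 2 * omGen q 1 = q ^ 2 • (omGen q 1 * omGen q 2) := by
  simpa [omGen_eq_mkAlgHom] using RingQuot.mkAlgHom_rel ℂ (OmRel.zetad (q := q))

theorem delta_mul_z : omGen q 3 * omGen q 0 = q⁻¹ ^ 2 • (omGen q 0 * omGen q 3) := by
  simpa [omGen_eq_mkAlgHom] using RingQuot.mkAlgHom_rel ℂ (OmRel.deltaz (q := q))

/- `(-1 : ℂ) •` rather than `-`: on `RingQuot` of a `FreeAlgebra` the multiplication coming from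
`Semiring` and the one coming from `Ring` are not reducibly equal, so lemmas such as `neg_mul`
do not fire, while scalar multiplication is handled by `module`. -/
noncomputable def parityGen : Fin 4 → RingQuot (OmRel q) :=
  ![omGen q 0, omGen q 1, (-1 : ℂ) • omGen q 2, (-1 : ℂ) • omGen q 3]

noncomputable def parity : RingQuot (OmRel q) →ₐ[ℂ] RingQuot (OmRel q) :=
  RingQuot.liftAlgHom ℂ ⟨FreeAlgebra.lift ℂ (parityGen q), fun _ _ h => by
    induction h <;>
      simp [parityGen, del_mul_z, zeta_mul_zeta, delta_mul_delta, delta_mul_zeta, zeta_mul_z,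
        delta_mul_del, zeta_mul_del, delta_mul_z] <;>
      module⟩

theorem parity_omGen (i : Fin 4) : parity q (omGen q i) = parityGen q i := by
  rw [omGen_eq_mkAlgHom, parity, RingQuot.liftAlgHom_mkAlgHom_apply, FreeAlgebra.lift_ι_apply]

noncomputable def dGen : Fin 4 → RingQuot (OmRel q) := ![omGen q 2, omGen q 3, 0, 0]

noncomputable def toTrivSqZeroExtGen (i : Fin 4) :
    TrivSqZeroExt (RingQuot (OmRel q)) (TwistedBimodule (parity q)) :=
  TrivSqZeroExt.inl (omGen q i) + TrivSqZeroExt.inr (of _ (dGen q i))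

section

variable (hq : q ≠ 0)

/- Well-definedness of `d`. The first component of each relation is the relation itself, the
second is `d` of the relation; rewriting with the relations brings both sides of either to
the ordered form `z ∂ ζ δ`. -/
noncomputable def toTrivSqZeroExt :
    RingQuot (OmRel q) →ₐ[ℂ] TrivSqZeroExt (RingQuot (OmRel q)) (TwistedBimodule (parity q)) :=
  RingQuot.liftAlgHom ℂ ⟨FreeAlgebra.lift ℂ (toTrivSqZeroExtGen q), fun _ _ h => by
    induction h <;> ext <;>
      simp [-neg_smul, toTrivSqZeroExtGen, dGen, smul_of, op_smul_of, parity_omGen, parityGen,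
        del_mul_z, zeta_mul_zeta, delta_mul_delta, delta_mul_zeta, zeta_mul_z, delta_mul_del,
        zeta_mul_del, delta_mul_z]
    all_goals match_scalars <;> field_simp⟩

theorem toTrivSqZeroExt_omGen (i : Fin 4) :
    toTrivSqZeroExt q hq (omGen q i) = toTrivSqZeroExtGen q i := by
  rw [omGen_eq_mkAlgHom, toTrivSqZeroExt, RingQuot.liftAlgHom_mkAlgHom_apply,
    FreeAlgebra.lift_ι_apply]

theorem fst_toTrivSqZeroExt (a : RingQuot (OmRel q)) : (toTrivSqZeroExt q hq a).fst = a := by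
  suffices (TrivSqZeroExt.fstHom ℂ _ _).comp (toTrivSqZeroExt q hq) = AlgHom.id ℂ _ from
    AlgHom.congr_fun this a
  refine RingQuot.ringQuot_ext' ℂ _ _ (FreeAlgebra.hom_ext (funext fun i => ?_))
  simp [← omGen_eq_mkAlgHom, toTrivSqZeroExt_omGen, toTrivSqZeroExtGen]

noncomputable def d : RingQuot (OmRel q) →ₗ[ℂ] RingQuot (OmRel q) :=
  derivation (toTrivSqZeroExt q hq)

theorem isTwistedDerivation_d : IsTwistedDerivation (AlgHom.id ℂ _) (parity q) (d q hq) :=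
  isTwistedDerivation_derivation _ (fst_toTrivSqZeroExt q hq)

theorem d_omGen (i : Fin 4) : d q hq (omGen q i) = dGen q i := by
  apply (of (parity q)).injective
  rw [d, of_derivation, toTrivSqZeroExt_omGen]
  simp [toTrivSqZeroExtGen]

theorem d_comp_parity_add_parity_comp_d :
    d q hq ∘ₗ (parity q).toLinearMap + (parity q).toLinearMap ∘ₗ d q hq = 0 := by
  refine (isTwistedDerivation_d q hq).comp_add_comp.eq_zero_of_adjoin_eq_top
    (adjoin_range_omGen q) ?_
  rintro _ ⟨i, rfl⟩
  fin_cases i <;> simp [parity_omGen, parityGen, d_omGen, dGen] <;> module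

theorem d_comp_d : d q hq ∘ₗ d q hq = 0 := by
  refine ((isTwistedDerivation_d q hq).comp_self
    (d_comp_parity_add_parity_comp_d q hq)).eq_zero_of_adjoin_eq_top (adjoin_range_omGen q) ?_
  rintro _ ⟨i, rfl⟩
  fin_cases i <;> simp [d_omGen, dGen]

theorem d_z_pow (hq2 : q - q⁻¹ ≠ 0) (m : ℕ) : d q hq (omGen q 0 ^ m)
    = (q ^ (1 - (m : ℤ)) * qint q m) • (omGen q 0 ^ (m - 1) * omGen q 2) := by
  rw [zpow_one_sub_mul_qint hq hq2]
  exact (isTwistedDerivation_d q hq).map_pow (parity_omGen q 0) (d_omGen q hq 0)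
    (zeta_mul_z q) m

theorem d_del_pow (hq2 : q - q⁻¹ ≠ 0) (n : ℕ) : d q hq (omGen q 1 ^ n)
    = (q ^ ((n : ℤ) - 1) * qint q n) • (omGen q 1 ^ (n - 1) * omGen q 3) := by
  rw [zpow_sub_one_mul_qint hq hq2]
  exact (isTwistedDerivation_d q hq).map_pow (parity_omGen q 1) (d_omGen q hq 1)
    (delta_mul_del q) n

end

end Omega

/-- the map `d(z) = ζ`, `d(∂) = δ`, `d(ζ) = d(δ) = 0`, `d(1) = 0`, extended
as a graded derivation (expressed via the parity automorphism `σ` fixing `z, ∂` and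
negating `ζ, δ`: `d(ab) = d(a)b + σ(a)d(b)`), is well defined on `Ω`, satisfies `d² = 0`,
and `d(z^m) = q^{1-m}[m]_q z^{m-1}ζ`, `d(∂^n) = q^{n-1}[n]_q ∂^{n-1}δ`. -/
theorem stmt17 (q : ℂ) (hq : q ≠ 0) (hq2 : q - q⁻¹ ≠ 0) :
    ∃ (σ : RingQuot (OmRel q) →ₐ[ℂ] RingQuot (OmRel q))
      (D : RingQuot (OmRel q) →ₗ[ℂ] RingQuot (OmRel q)),
      σ (omGen q 0) = omGen q 0 ∧ σ (omGen q 1) = omGen q 1 ∧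
      σ (omGen q 2) = -omGen q 2 ∧ σ (omGen q 3) = -omGen q 3 ∧
      D (omGen q 0) = omGen q 2 ∧ D (omGen q 1) = omGen q 3 ∧
      D (omGen q 2) = 0 ∧ D (omGen q 3) = 0 ∧ D 1 = 0 ∧
      (∀ a b : RingQuot (OmRel q), D (a * b) = D a * b + σ a * D b) ∧
      D ∘ₗ D = 0 ∧
      (∀ m : ℕ, D (omGen q 0 ^ m)
        = (q ^ (1 - (m : ℤ)) * qint q m) • (omGen q 0 ^ (m - 1) * omGen q 2)) ∧
      (∀ n : ℕ, D (omGen q 1 ^ n)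
        = (q ^ ((n : ℤ) - 1) * qint q n) • (omGen q 1 ^ (n - 1) * omGen q 3)) := by
  have hd := Omega.isTwistedDerivation_d q hq
  refine ⟨Omega.parity q, Omega.d q hq, Omega.parity_omGen q 0, Omega.parity_omGen q 1,
    (Omega.parity_omGen q 2).trans (neg_one_smul ℂ (omGen q 2)),
    (Omega.parity_omGen q 3).trans (neg_one_smul ℂ (omGen q 3)),
    Omega.d_omGen q hq 0, Omega.d_omGen q hq 1, Omega.d_omGen q hq 2, Omega.d_omGen q hq 3,
    hd.map_one_eq_zero, hd, Omega.d_comp_d q hq, Omega.d_z_pow q hq hq2, Omega.d_del_pow q hq hq2⟩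
end
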